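/- arXiv:1802.09747 — 12 statements merged into one kernel-verified Lean document; each statement's English description precedes it below -/
import Mathlib

section
/- Under the AAGD dynamics with parameter choice θ^k = 2/(k+2), if the step size satisfies 2γL + 3γL(τ² + 3τ)² ≤ 1 and the first τ iterations are performed serially (j(k) = k for every k < τ), then for every K ≥ 0, F(x^{K+1}) − F(x^*) ≤ (θ^K)² · (1/(2γ)) · ‖z^0 − x^*‖², where θ^K = 2/(K+2). -/
/-!
For `θ k = 2 / (k + 2)` every iterate is an affine combination of the increments of `z`:
`x k = z 0 + ∑ m < k, aagdCoeff m k • (z (m + 1) - z m)`, the extrapolated point `y k` carries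
the coefficients `aagdCoeff m (k + 1)`, and the momentum compensation is exactly what gives `w k`
these same coefficients on the increments `m < j k`. Hence `y k - w k` only involves the at most
`τ` most recent increments, each with a coefficient of size at most `(τ + 1) θ k`.

The usual accelerated estimate (descent lemma at `w k`, convexity of `f` and `h`, three-point
inequality of the proximal step) gives, with `E k = F (x k) - F x⋆` and
`D k = ‖z k - x⋆‖² / (2γ)`, the recursion `E (k+1) ≤ (1 - θ k) E k + θ k² (D k - D (k+1) + c k)`,
where `c k` collects `(L - 1/(2γ)) ‖z (k+1) - z k‖²` and the delayed increments. As
`(1 - θ (k+1)) / θ (k+1)² ≤ 1 / θ k²`, dividing by `θ k²` telescopes, and the step-size condition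
makes `∑ c k ≤ 0`.
-/

open scoped RealInnerProductSpace
open Filter Finset

section InnerProduct

variable {H : Type*} [NormedAddCommGroup H] [InnerProductSpace ℝ H]

theorem norm_smul_add_smul_sub_sq (p u c : H) (t : ℝ) :
    ‖(1 - t) • p + t • u - c‖ ^ 2
      = (1 - t) * ‖p - c‖ ^ 2 + t * ‖u - c‖ ^ 2 - t * (1 - t) * ‖u - p‖ ^ 2 := by
  have hup : ‖u - p‖ ^ 2 = ‖u - c‖ ^ 2 - 2 * ⟪u - c, p - c⟫ + ‖p - c‖ ^ 2 := by
    rw [← norm_sub_sq_real, sub_sub_sub_cancel_right]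
  rw [show (1 - t) • p + t • u - c = (1 - t) • (p - c) + t • (u - c) by module,
    norm_add_sq_real, hup, real_inner_smul_left, real_inner_smul_right, norm_smul, norm_smul,
    mul_pow, mul_pow, Real.norm_eq_abs, Real.norm_eq_abs, sq_abs, sq_abs,
    real_inner_comm (u - c)]
  ring

theorem ConvexOn.three_point {h : H → ℝ} (hconv : ConvexOn ℝ Set.univ h) {g z p : H} {c : ℝ}
    (hp : ∀ u, h p + ⟪g, p - z⟫ + c * ‖p - z‖ ^ 2 ≤ h u + ⟪g, u - z⟫ + c * ‖u - z‖ ^ 2)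
    (u : H) :
    h p + ⟪g, p - z⟫ + c * ‖p - z‖ ^ 2 + c * ‖u - p‖ ^ 2
      ≤ h u + ⟪g, u - z⟫ + c * ‖u - z‖ ^ 2 := by
  -- minimality at `(1 - t) • p + t • u` is `t` times the claim with `c * (1 - t)` in place of
  -- the last `c`; then let `t → 0`
  set φ : ℝ → ℝ := fun t => h p + ⟪g, p - z⟫ + c * ‖p - z‖ ^ 2 + c * (1 - t) * ‖u - p‖ ^ 2
  have hφ : ∀ t ∈ Set.Ioo (0 : ℝ) 1, φ t ≤ h u + ⟪g, u - z⟫ + c * ‖u - z‖ ^ 2 := by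
    rintro t ⟨ht0, ht1⟩
    have hmin := hp ((1 - t) • p + t • u)
    have hh : h ((1 - t) • p + t • u) ≤ (1 - t) * h p + t * h u :=
      hconv.2 (Set.mem_univ p) (Set.mem_univ u) (by linarith) ht0.le (by ring)
    have hinner : ⟪g, (1 - t) • p + t • u - z⟫ = (1 - t) * ⟪g, p - z⟫ + t * ⟪g, u - z⟫ := by
      rw [show (1 - t) • p + t • u - z = (1 - t) • (p - z) + t • (u - z) by module,
        inner_add_right, real_inner_smul_right, real_inner_smul_right]
    rw [hinner, norm_smul_add_smul_sub_sq] at hmin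
    refine le_of_mul_le_mul_left ?_ ht0
    linear_combination hmin + hh
  have hcont : Continuous φ := by fun_prop
  have h0 : φ 0 ≤ h u + ⟪g, u - z⟫ + c * ‖u - z‖ ^ 2 :=
    le_of_tendsto ((hcont.tendsto 0).mono_left (nhdsWithin_le_nhds (s := Set.Ioi 0)))
      (eventually_of_mem (Ioo_mem_nhdsGT one_pos) hφ)
  simpa [φ] using h0

end InnerProduct

section Smooth

variable {H : Type*} [NormedAddCommGroup H] [InnerProductSpace ℝ H] [CompleteSpace H]
  {f : H → ℝ} {f' : H → H}

lemma hasDerivAt_comp_lineMap (hf : ∀ u, HasGradientAt f (f' u) u) (v u : H) (t : ℝ) :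
    HasDerivAt (fun s : ℝ => f (AffineMap.lineMap v u s))
      ⟪f' (AffineMap.lineMap v u t), u - v⟫ t := by
  simpa [Function.comp_def] using
    (hf _).hasFDerivAt.comp_hasDerivAt t AffineMap.hasDerivAt_lineMap

theorem ConvexOn.add_inner_gradient_le (hconv : ConvexOn ℝ Set.univ f)
    (hf : ∀ u, HasGradientAt f (f' u) u) (v u : H) :
    f v + ⟪f' v, u - v⟫ ≤ f u := by
  have hline : ConvexOn ℝ Set.univ (fun s : ℝ => f (AffineMap.lineMap v u s)) :=
    hconv.comp_affineMap (AffineMap.lineMap v u)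
  have := hline.le_slope_of_hasDerivAt (Set.mem_univ 0) (Set.mem_univ 1) one_pos
    (by simpa using hasDerivAt_comp_lineMap hf v u 0)
  rw [slope_def_field, AffineMap.lineMap_apply_one, AffineMap.lineMap_apply_zero, sub_zero,
    div_one] at this
  linarith

theorem le_add_inner_gradient_add_sq {L : ℝ} (hf : ∀ u, HasGradientAt f (f' u) u)
    (hlip : ∀ u v, ‖f' u - f' v‖ ≤ L * ‖u - v‖) (v u : H) :
    f u ≤ f v + ⟪f' v, u - v⟫ + L / 2 * ‖u - v‖ ^ 2 := by
  set g : ℝ → ℝ := fun s => f (AffineMap.lineMap v u s) - s * ⟪f' v, u - v⟫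
    - L / 2 * ‖u - v‖ ^ 2 * s ^ 2
  have hg : ∀ t, HasDerivAt g
      (⟪f' (AffineMap.lineMap v u t) - f' v, u - v⟫ - L * ‖u - v‖ ^ 2 * t) t := by
    intro t
    have := ((hasDerivAt_comp_lineMap hf v u t).sub
      ((hasDerivAt_id t).mul_const ⟪f' v, u - v⟫)).sub
      (((hasDerivAt_pow 2 t).const_mul (L / 2 * ‖u - v‖ ^ 2)))
    refine this.congr_deriv ?_
    rw [inner_sub_left]
    simp only [Nat.cast_ofNat]
    ring
  obtain ⟨c, hc, hgc⟩ := exists_hasDerivAt_eq_slope g _ zero_lt_one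
    (fun t _ => (hg t).continuousAt.continuousWithinAt) (fun t _ => hg t)
  have hlin : ⟪f' (AffineMap.lineMap v u c) - f' v, u - v⟫ ≤ L * ‖u - v‖ ^ 2 * c :=
    calc ⟪f' (AffineMap.lineMap v u c) - f' v, u - v⟫
        ≤ ‖f' (AffineMap.lineMap v u c) - f' v‖ * ‖u - v‖ := real_inner_le_norm _ _
      _ ≤ L * ‖AffineMap.lineMap v u c - v‖ * ‖u - v‖ := by gcongr; exact hlip _ _
      _ = L * ‖u - v‖ ^ 2 * c := by
        rw [AffineMap.lineMap_apply_module', add_sub_cancel_right, norm_smul,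
          Real.norm_of_nonneg hc.1.le]
        ring
  have h01 : g 1 ≤ g 0 := by rw [sub_zero, div_one] at hgc; linarith
  simp only [g, AffineMap.lineMap_apply_one, AffineMap.lineMap_apply_zero] at h01
  linarith

theorem aagd_gap_succ_le {f h : H → ℝ} {f' : H → H} {L γ θ : ℝ} (hL : 0 ≤ L) (hθ0 : 0 < θ)
    (hθ1 : θ ≤ 1) (hf_conv : ConvexOn ℝ Set.univ f) (hf_grad : ∀ u, HasGradientAt f (f' u) u)
    (hf_lip : ∀ u v, ‖f' u - f' v‖ ≤ L * ‖u - v‖) (hh_conv : ConvexOn ℝ Set.univ h)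
    {xstar xk zk zk1 wk : H}
    (hz : ∀ u, h zk1 + ⟪f' wk, zk1 - zk⟫ + θ / (2 * γ) * ‖zk1 - zk‖ ^ 2
      ≤ h u + ⟪f' wk, u - zk⟫ + θ / (2 * γ) * ‖u - zk‖ ^ 2) :
    f (θ • zk1 + (1 - θ) • xk) + h (θ • zk1 + (1 - θ) • xk) - (f xstar + h xstar)
      ≤ (1 - θ) * (f xk + h xk - (f xstar + h xstar))
        + θ ^ 2 * (‖zk - xstar‖ ^ 2 / (2 * γ) - ‖zk1 - xstar‖ ^ 2 / (2 * γ)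
          + (L - 1 / (2 * γ)) * ‖zk1 - zk‖ ^ 2)
        + L * ‖(1 - θ) • xk + θ • zk - wk‖ ^ 2 := by
  set g := f' wk
  set xk1 := θ • zk1 + (1 - θ) • xk
  set yk := (1 - θ) • xk + θ • zk
  have hdesc := le_add_inner_gradient_add_sq hf_grad hf_lip wk xk1
  have hsq : ‖xk1 - wk‖ ^ 2 ≤ 2 * θ ^ 2 * ‖zk1 - zk‖ ^ 2 + 2 * ‖yk - wk‖ ^ 2 := by
    rw [show xk1 - wk = θ • (zk1 - zk) + (yk - wk) by simp only [xk1, yk]; module]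
    calc ‖θ • (zk1 - zk) + (yk - wk)‖ ^ 2 ≤ (‖θ • (zk1 - zk)‖ + ‖yk - wk‖) ^ 2 := by
          gcongr
          exact norm_add_le _ _
      _ = (θ * ‖zk1 - zk‖ + ‖yk - wk‖) ^ 2 := by rw [norm_smul, Real.norm_of_nonneg hθ0.le]
      _ ≤ 2 * θ ^ 2 * ‖zk1 - zk‖ ^ 2 + 2 * ‖yk - wk‖ ^ 2 := by
          nlinarith [sq_nonneg (θ * ‖zk1 - zk‖ - ‖yk - wk‖)]
  have hinner : ⟪g, xk1 - wk⟫ = (1 - θ) * ⟪g, xk - wk⟫ + θ * ⟪g, xstar - wk⟫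
      + θ * ⟪g, zk1 - zk⟫ - θ * ⟪g, xstar - zk⟫ := by
    rw [show xk1 - wk = (1 - θ) • (xk - wk) + θ • (xstar - wk) + θ • (zk1 - zk)
      - θ • (xstar - zk) by simp only [xk1]; module]
    simp only [inner_add_right, inner_sub_right, real_inner_smul_right]
  have hfx := hf_conv.add_inner_gradient_le hf_grad wk xk
  have hfstar := hf_conv.add_inner_gradient_le hf_grad wk xstar
  have hh : h xk1 ≤ θ * h zk1 + (1 - θ) * h xk :=
    hh_conv.2 (Set.mem_univ _) (Set.mem_univ _) hθ0.le (by linarith) (by ring)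
  have htp := hh_conv.three_point hz xstar
  rw [norm_sub_rev xstar zk1, norm_sub_rev xstar zk] at htp
  linear_combination hdesc + L / 2 * hsq + hinner + (1 - θ) * hfx + θ * hfstar + hh + θ * htp

end Smooth

/-- With `θ k = 2 / (k + 2)` one has `x k = z 0 + ∑ m < k, aagdCoeff m k • (z (m + 1) - z m)`.
The numerator is kept unsimplified so that `aagdCoeff k k = 0` holds also for `k = 0`. -/
noncomputable def aagdCoeff (m k : ℕ) : ℝ := ((k : ℝ) * (k + 1) - m * (m + 1)) / (k * (k + 1))

@[simp]
lemma aagdCoeff_self (k : ℕ) : aagdCoeff k k = 0 := by simp [aagdCoeff]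

lemma aagdCoeff_succ {m k : ℕ} (hm : m ≤ k) :
    2 / ((k : ℝ) + 2) + (1 - 2 / ((k : ℝ) + 2)) * aagdCoeff m k = aagdCoeff m (k + 1) := by
  rcases Nat.eq_zero_or_pos k with rfl | hk
  · obtain rfl : m = 0 := Nat.le_zero.1 hm
    norm_num [aagdCoeff]
  · have : (k : ℝ) ≠ 0 := by positivity
    unfold aagdCoeff
    push_cast
    field_simp
    ring

/-- The extrapolation performed by the momentum compensation: the coefficient in front of
`aagdCoeff m (J + 1) - aagdCoeff m J` is `∑ i ∈ Icc (J + 1) k, b (J + 1) i`. -/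
lemma aagdCoeff_extrapolate {m J : ℕ} (hm : m ≤ J) (k : ℕ) :
    aagdCoeff m (J + 1) + ((J : ℝ) / 2 - J * (J + 1) * (J + 2) / (2 * (k + 1) * (k + 2)))
      * (aagdCoeff m (J + 1) - aagdCoeff m J) = aagdCoeff m (k + 1) := by
  rcases Nat.eq_zero_or_pos J with rfl | hJ
  · obtain rfl : m = 0 := Nat.le_zero.1 hm
    norm_num [aagdCoeff]
    field_simp
  · have : (J : ℝ) ≠ 0 := by positivity
    unfold aagdCoeff
    push_cast
    field_simp
    ring

lemma abs_aagdCoeff_le {m k τ : ℕ} (hmk : m < k) (hkm : k ≤ m + τ) :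
    |aagdCoeff m (k + 1)| ≤ ((τ : ℝ) + 1) * (2 / ((k : ℝ) + 2)) := by
  have hmk : (m : ℝ) + 1 ≤ k := by exact_mod_cast hmk
  have hkm : (k : ℝ) ≤ m + τ := by exact_mod_cast hkm
  have hm : (0 : ℝ) ≤ m := m.cast_nonneg
  have hnum : ((k : ℝ) + 1) * (k + 1 + 1) - m * (m + 1) = (k + 1 - m) * (k + 2 + m) := by ring
  unfold aagdCoeff
  push_cast
  rw [hnum, abs_of_nonneg (div_nonneg (mul_nonneg (by linarith) (by positivity)) (by positivity)),
    div_le_iff₀ (by positivity)]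
  have := mul_le_mul (show (k : ℝ) + 1 - m ≤ τ + 1 by linarith)
    (show (k : ℝ) + 2 + m ≤ 2 * (k + 1) by linarith) (by positivity) (by positivity)
  calc ((k : ℝ) + 1 - m) * (k + 2 + m) ≤ (τ + 1) * (2 * (k + 1)) := this
    _ = (τ + 1) * (2 / (k + 2)) * ((k + 1) * (k + 1 + 1)) := by field_simp; ring

lemma momentum_coeff_succ {θ a : ℕ → ℝ} (hθ : ∀ k, θ k = 2 / ((k : ℝ) + 2))
    (ha : ∀ k, 1 ≤ k → a k = θ k * (1 - θ (k - 1)) / θ (k - 1)) (i : ℕ) :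
    a (i + 1) = i / (i + 3) := by
  rw [ha (i + 1) (Nat.le_add_left 1 i), Nat.add_sub_cancel, hθ, hθ]
  push_cast
  field_simp
  ring

lemma prod_momentum_coeff {a : ℕ → ℝ} (ha : ∀ i, a (i + 1) = i / (i + 3)) {J i : ℕ}
    (hJi : J + 1 ≤ i) :
    ∏ l ∈ Icc (J + 1) i, a l = (J : ℝ) * (J + 1) * (J + 2) / (i * (i + 1) * (i + 2)) := by
  induction i, hJi using Nat.le_induction with
  | base =>
    rw [Icc_self, prod_singleton, ha]
    push_cast
    field_simp
    ring
  | succ i hJi ih =>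
    have hi : (i : ℝ) ≠ 0 := Nat.cast_ne_zero.2 (by omega)
    rw [prod_Icc_succ_top (by omega), ih, ha]
    push_cast
    field_simp
    ring

lemma sum_prod_momentum_coeff {a : ℕ → ℝ} (ha : ∀ i, a (i + 1) = i / (i + 3)) {J k : ℕ}
    (hJk : J + 1 ≤ k) :
    ∑ i ∈ Icc (J + 1) k, ∏ l ∈ Icc (J + 1) i, a l
      = (J : ℝ) / 2 - J * (J + 1) * (J + 2) / (2 * (k + 1) * (k + 2)) := by
  induction k, hJk using Nat.le_induction with
  | base =>
    rw [Icc_self, sum_singleton, prod_momentum_coeff ha le_rfl]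
    push_cast
    field_simp
    ring
  | succ k hJk ih =>
    rw [sum_Icc_succ_top (by omega), ih, prod_momentum_coeff ha (by omega)]
    have hk : (k : ℝ) ≠ 0 := Nat.cast_ne_zero.2 (by omega)
    push_cast
    field_simp
    ring

lemma norm_sum_Ico_smul_sq_le {E : Type*} [NormedAddCommGroup E] [NormedSpace ℝ E]
    (c : ℕ → ℝ) (d : ℕ → E) {B : ℝ} {i k τ : ℕ} (hi : k - τ ≤ i)
    (hc : ∀ m ∈ Ico i k, |c m| ≤ B) :
    ‖∑ m ∈ Ico i k, c m • d m‖ ^ 2 ≤ τ * B ^ 2 * ∑ m ∈ Ico (k - τ) k, ‖d m‖ ^ 2 := by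
  have hcard : ((Ico i k).card : ℝ) ≤ τ := by
    rw [Nat.card_Ico]; exact_mod_cast (by omega : k - i ≤ τ)
  calc ‖∑ m ∈ Ico i k, c m • d m‖ ^ 2 ≤ (∑ m ∈ Ico i k, ‖c m • d m‖) ^ 2 := by
        gcongr; exact norm_sum_le _ _
    _ ≤ (Ico i k).card * ∑ m ∈ Ico i k, ‖c m • d m‖ ^ 2 := sq_sum_le_card_mul_sum_sq
    _ ≤ τ * ∑ m ∈ Ico i k, B ^ 2 * ‖d m‖ ^ 2 := by
        gcongr with m hm
        rw [norm_smul, mul_pow, Real.norm_eq_abs, sq_abs]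
        exact mul_le_mul_of_nonneg_right (sq_le_sq' (neg_le_of_abs_le (hc m hm))
          (le_of_abs_le (hc m hm))) (by positivity)
    _ ≤ τ * ∑ m ∈ Ico (k - τ) k, B ^ 2 * ‖d m‖ ^ 2 := by
        gcongr
    _ = τ * B ^ 2 * ∑ m ∈ Ico (k - τ) k, ‖d m‖ ^ 2 := by rw [mul_assoc, ← mul_sum]

/-- Every index `m` lies in at most `τ` of the windows `Ico (k - τ) k`. -/
lemma sum_range_sum_Ico_sub_le {t : ℕ → ℝ} (ht : ∀ m, 0 ≤ t m) (τ N : ℕ) :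
    ∑ k ∈ range N, ∑ m ∈ Ico (k - τ) k, t m ≤ τ * ∑ m ∈ range N, t m := by
  rw [sum_comm' (t' := range N) (s' := fun m => Ico (m + 1) (min N (m + 1 + τ)))
    (fun k m => by simp only [mem_range, mem_Ico]; omega), mul_sum]
  gcongr with m
  rw [sum_const, Nat.card_Ico, nsmul_eq_mul]
  exact mul_le_mul_of_nonneg_right
    (by exact_mod_cast (by omega : min N (m + 1 + τ) - (m + 1) ≤ τ)) (ht m)

section Iterates

variable {H : Type*} [NormedAddCommGroup H] [InnerProductSpace ℝ H] {θ : ℕ → ℝ} {x z : ℕ → H}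

theorem aagd_x_eq (hθ : ∀ k, θ k = 2 / ((k : ℝ) + 2)) (hx0 : x 0 = z 0)
    (hx : ∀ k, x (k + 1) = θ k • z (k + 1) + (1 - θ k) • x k) (k : ℕ) :
    x k = z 0 + ∑ m ∈ range k, aagdCoeff m k • (z (m + 1) - z m) := by
  induction k with
  | zero => simp [hx0]
  | succ k ih =>
    have hz : z (k + 1) = z 0 + ∑ m ∈ range (k + 1), (z (m + 1) - z m) := by
      rw [sum_range_sub]; abel
    have hxk : x k = z 0 + ∑ m ∈ range (k + 1), aagdCoeff m k • (z (m + 1) - z m) := by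
      rw [sum_range_succ, aagdCoeff_self, zero_smul, add_zero, ih]
    have hcoeff : ∀ m ∈ range (k + 1), aagdCoeff m (k + 1) • (z (m + 1) - z m)
        = θ k • (z (m + 1) - z m) + (1 - θ k) • aagdCoeff m k • (z (m + 1) - z m) := by
      intro m hm
      rw [← aagdCoeff_succ (Nat.lt_succ_iff.1 (mem_range.1 hm)), ← hθ, add_smul, smul_smul]
    rw [hx, hz, hxk, sum_congr rfl hcoeff, sum_add_distrib, ← smul_sum, ← smul_sum]
    module

theorem aagd_y_eq (hθ : ∀ k, θ k = 2 / ((k : ℝ) + 2)) (hx0 : x 0 = z 0)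
    (hx : ∀ k, x (k + 1) = θ k • z (k + 1) + (1 - θ k) • x k) {y : ℕ → H}
    (hy : ∀ k, y k = (1 - θ k) • x k + θ k • z k) (k : ℕ) :
    y k = z 0 + ∑ m ∈ range k, aagdCoeff m (k + 1) • (z (m + 1) - z m) := by
  have hz : z k = z 0 + ∑ m ∈ range k, (z (m + 1) - z m) := by rw [sum_range_sub]; abel
  have hcoeff : ∀ m ∈ range k, aagdCoeff m (k + 1) • (z (m + 1) - z m)
      = θ k • (z (m + 1) - z m) + (1 - θ k) • aagdCoeff m k • (z (m + 1) - z m) := by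
    intro m hm
    rw [← aagdCoeff_succ (mem_range.1 hm).le, ← hθ, add_smul, smul_smul]
  rw [hy, hz, aagd_x_eq hθ hx0 hx, sum_congr rfl hcoeff, sum_add_distrib, ← smul_sum,
    ← smul_sum]
  module

theorem aagd_w_eq (hθ : ∀ k, θ k = 2 / ((k : ℝ) + 2)) (hx0 : x 0 = z 0)
    (hx : ∀ k, x (k + 1) = θ k • z (k + 1) + (1 - θ k) • x k) {a : ℕ → ℝ} {b : ℕ → ℕ → ℝ}
    (ha : ∀ k, 1 ≤ k → a k = θ k * (1 - θ (k - 1)) / θ (k - 1))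
    (hb : ∀ l k, b l k = ∏ i ∈ Icc l k, a i) {j : ℕ → ℕ} (hj : ∀ k, j k ≤ k) {w : ℕ → H}
    (hw : ∀ k, w k = x (j k) + (∑ i ∈ Icc (j k) k, b (j k) i) • (x (j k) - x (j k - 1)))
    (k : ℕ) :
    w k = z 0 + ∑ m ∈ range (j k), aagdCoeff m (k + 1) • (z (m + 1) - z m) := by
  rw [hw]
  rcases hJ : j k with _ | J
  · simp [hx0]
  have hJk : J + 1 ≤ k := hJ ▸ hj k
  have hS : ∑ i ∈ Icc (J + 1) k, b (J + 1) i
      = (J : ℝ) / 2 - J * (J + 1) * (J + 2) / (2 * (k + 1) * (k + 2)) := by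
    simp_rw [hb]
    exact sum_prod_momentum_coeff (momentum_coeff_succ hθ ha) hJk
  have hxJ : x J = z 0 + ∑ m ∈ range (J + 1), aagdCoeff m J • (z (m + 1) - z m) := by
    rw [sum_range_succ, aagdCoeff_self, zero_smul, add_zero, aagd_x_eq hθ hx0 hx]
  rw [Nat.add_sub_cancel, hS, aagd_x_eq hθ hx0 hx (J + 1), hxJ, add_sub_add_left_eq_sub,
    ← sum_sub_distrib, smul_sum, add_assoc, ← sum_add_distrib]
  congr 1
  refine sum_congr rfl fun m hm => ?_
  rw [← sub_smul, smul_smul, ← add_smul,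
    aagdCoeff_extrapolate (Nat.lt_succ_iff.1 (mem_range.1 hm))]

theorem aagd_norm_y_sub_w_sq_le {a : ℕ → ℝ} {b : ℕ → ℕ → ℝ} {y w : ℕ → H} {j : ℕ → ℕ} {τ : ℕ}
    (hθ : ∀ k, θ k = 2 / ((k : ℝ) + 2))
    (ha : ∀ k, 1 ≤ k → a k = θ k * (1 - θ (k - 1)) / θ (k - 1))
    (hb : ∀ l k, b l k = ∏ i ∈ Icc l k, a i) (hj : ∀ k, k - τ ≤ j k ∧ j k ≤ k)
    (hx0 : x 0 = z 0) (hx : ∀ k, x (k + 1) = θ k • z (k + 1) + (1 - θ k) • x k)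
    (hy : ∀ k, y k = (1 - θ k) • x k + θ k • z k)
    (hw : ∀ k, w k = x (j k) + (∑ i ∈ Icc (j k) k, b (j k) i) • (x (j k) - x (j k - 1)))
    (k : ℕ) :
    ‖y k - w k‖ ^ 2
      ≤ τ * (((τ : ℝ) + 1) * θ k) ^ 2 * ∑ m ∈ Ico (k - τ) k, ‖z (m + 1) - z m‖ ^ 2 := by
  have hdiff : y k - w k = ∑ m ∈ Ico (j k) k, aagdCoeff m (k + 1) • (z (m + 1) - z m) := by
    rw [aagd_y_eq hθ hx0 hx hy, aagd_w_eq hθ hx0 hx ha hb (fun k => (hj k).2) hw,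
      add_sub_add_left_eq_sub, sum_Ico_eq_sub _ (hj k).2]
  rw [hdiff]
  refine norm_sum_Ico_smul_sq_le _ _ (hj k).1 fun m hm => ?_
  obtain ⟨hjm, hmk⟩ := mem_Ico.1 hm
  rw [hθ]
  exact abs_aagdCoeff_le hmk (Nat.sub_le_iff_le_add.1 ((hj k).1.trans hjm))

end Iterates

lemma one_sub_mul_sq_le_sq {θ : ℕ → ℝ} (hθ : ∀ k, θ k = 2 / ((k : ℝ) + 2)) (k : ℕ) :
    (1 - θ (k + 1)) * θ k ^ 2 ≤ θ (k + 1) ^ 2 := by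
  rw [hθ, hθ, div_pow, div_pow, one_sub_div (by positivity), div_mul_div_comm,
    div_le_div_iff₀ (by positivity) (by positivity)]
  push_cast
  nlinarith [(k.cast_nonneg : (0 : ℝ) ≤ k)]

lemma sum_delay_correction_nonpos {Δ : ℕ → ℝ} (hΔ : ∀ m, 0 ≤ Δ m) {L γ : ℝ} {τ : ℕ}
    (hL : 0 ≤ L) (hγ : 0 < γ)
    (hstep : 2 * γ * L + 3 * γ * L * ((τ : ℝ) ^ 2 + 3 * τ) ^ 2 ≤ 1) (N : ℕ) :
    ∑ k ∈ range N, ((L - 1 / (2 * γ)) * Δ k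
      + L * τ * ((τ : ℝ) + 1) ^ 2 * ∑ m ∈ Ico (k - τ) k, Δ m) ≤ 0 := by
  have hτ : (0 : ℝ) ≤ τ := τ.cast_nonneg
  have hL' : L + L * τ ^ 2 * ((τ : ℝ) + 1) ^ 2 ≤ 1 / (2 * γ) := by
    rw [le_div_iff₀ (by positivity)]
    have hτ2 : ((τ : ℝ) * (τ + 1)) ^ 2 ≤ (τ ^ 2 + 3 * τ) ^ 2 :=
      pow_le_pow_left₀ (by positivity) (by nlinarith) 2
    have hγL : 0 ≤ γ * L := mul_nonneg hγ.le hL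
    nlinarith [mul_le_mul_of_nonneg_left hτ2 hγL,
      mul_nonneg hγL (sq_nonneg ((τ : ℝ) ^ 2 + 3 * τ))]
  have hsum : 0 ≤ ∑ k ∈ range N, Δ k := sum_nonneg fun k _ => hΔ k
  have hwin := sum_range_sum_Ico_sub_le hΔ τ N
  rw [sum_add_distrib, ← mul_sum, ← mul_sum]
  nlinarith [mul_le_mul_of_nonneg_left hwin (by positivity : 0 ≤ L * τ * ((τ : ℝ) + 1) ^ 2),
    mul_le_mul_of_nonneg_right hL' hsum]

theorem lyapunov_telescope {θ E D c : ℕ → ℝ} (hθ0 : θ 0 = 1) (hθpos : ∀ k, 0 < θ k)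
    (hθ : ∀ k, (1 - θ (k + 1)) * θ k ^ 2 ≤ θ (k + 1) ^ 2) (hE : ∀ k, 0 ≤ E (k + 1))
    (hstep : ∀ k, E (k + 1) ≤ (1 - θ k) * E k + θ k ^ 2 * (D k - D (k + 1) + c k)) (K : ℕ) :
    E (K + 1) / θ K ^ 2 + D (K + 1) ≤ D 0 + ∑ k ∈ range (K + 1), c k := by
  induction K with
  | zero =>
    have h0 := hstep 0
    simp only [hθ0, sub_self, zero_mul, one_pow, one_mul, zero_add] at h0
    rw [hθ0, one_pow, div_one, sum_range_one]
    linarith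
  | succ K ih =>
    have hθK := hθpos K
    have hθK1 := hθpos (K + 1)
    have hdiv : E (K + 1 + 1) / θ (K + 1) ^ 2
        ≤ (1 - θ (K + 1)) / θ (K + 1) ^ 2 * E (K + 1)
          + (D (K + 1) - D (K + 1 + 1) + c (K + 1)) :=
      calc E (K + 1 + 1) / θ (K + 1) ^ 2
          ≤ ((1 - θ (K + 1)) * E (K + 1)
            + θ (K + 1) ^ 2 * (D (K + 1) - D (K + 1 + 1) + c (K + 1))) / θ (K + 1) ^ 2 := by
            gcongr; exact hstep (K + 1)
        _ = _ := by field_simp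
    have hratio : (1 - θ (K + 1)) / θ (K + 1) ^ 2 * E (K + 1) ≤ E (K + 1) / θ K ^ 2 := by
      rw [div_mul_eq_mul_div, div_le_div_iff₀ (by positivity) (by positivity)]
      nlinarith [hθ K, hE K]
    rw [sum_range_succ]
    linarith

theorem aagd_nonstrongly_convex_general
    {H : Type*} [NormedAddCommGroup H] [InnerProductSpace ℝ H] [CompleteSpace H]
    (f h : H → ℝ) (f' : H → H) (L : ℝ) (hL : 0 < L)
    (hf_conv : ConvexOn ℝ Set.univ f)
    (hf_grad : ∀ u, HasGradientAt f (f' u) u)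
    (hf_lip : ∀ u v, ‖f' u - f' v‖ ≤ L * ‖u - v‖)
    (hh_conv : ConvexOn ℝ Set.univ h)
    (xstar : H) (hmin : ∀ u, f xstar + h xstar ≤ f u + h u)
    (γ : ℝ) (hγ : 0 < γ)
    (τ : ℕ)
    (j : ℕ → ℕ) (hj : ∀ k, k - τ ≤ j k ∧ j k ≤ k)
    (θ a : ℕ → ℝ) (b : ℕ → ℕ → ℝ)
    (hθ : ∀ k, θ k = 2 / ((k : ℝ) + 2))
    (ha : ∀ k, 1 ≤ k → a k = θ k * (1 - θ (k - 1)) / θ (k - 1))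
    (hb : ∀ l k, b l k = ∏ i ∈ Finset.Icc l k, a i)
    (x z y w : ℕ → H)
    (hx0 : x 0 = z 0)
    (hy : ∀ k, y k = (1 - θ k) • x k + θ k • z k)
    (hw : ∀ k, w k = x (j k)
        + (∑ i ∈ Finset.Icc (j k) k, b (j k) i) • (x (j k) - x (j k - 1)))
    (hz : ∀ k, ∀ u : H,
      h (z (k + 1)) + ⟪f' (w k), z (k + 1) - z k⟫
          + θ k / (2 * γ) * ‖z (k + 1) - z k‖ ^ 2
        ≤ h u + ⟪f' (w k), u - z k⟫ + θ k / (2 * γ) * ‖u - z k‖ ^ 2)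
    (hx : ∀ k, x (k + 1) = θ k • z (k + 1) + (1 - θ k) • x k)
    (hstep : 2 * γ * L + 3 * γ * L * ((τ : ℝ) ^ 2 + 3 * τ) ^ 2 ≤ 1) :
    ∀ K : ℕ, (f (x (K + 1)) + h (x (K + 1))) - (f xstar + h xstar)
      ≤ (θ K) ^ 2 * (1 / (2 * γ) * ‖z 0 - xstar‖ ^ 2) := by
  intro K
  have hθpos : ∀ k, 0 < θ k := fun k => by rw [hθ]; positivity
  have hθle : ∀ k, θ k ≤ 1 := fun k => by
    rw [hθ, div_le_one (by positivity)]; linarith [(k.cast_nonneg : (0 : ℝ) ≤ k)]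
  set Δ : ℕ → ℝ := fun m => ‖z (m + 1) - z m‖ ^ 2
  set c : ℕ → ℝ := fun k =>
    (L - 1 / (2 * γ)) * Δ k + L * τ * ((τ : ℝ) + 1) ^ 2 * ∑ m ∈ Ico (k - τ) k, Δ m
  have hdecrease : ∀ k, f (x (k + 1)) + h (x (k + 1)) - (f xstar + h xstar)
      ≤ (1 - θ k) * (f (x k) + h (x k) - (f xstar + h xstar))
        + θ k ^ 2 * (‖z k - xstar‖ ^ 2 / (2 * γ) - ‖z (k + 1) - xstar‖ ^ 2 / (2 * γ) + c k) := by
    intro k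
    have hone := aagd_gap_succ_le (xstar := xstar) (xk := x k) hL.le (hθpos k) (hθle k)
      hf_conv hf_grad hf_lip hh_conv (hz k)
    have herr := aagd_norm_y_sub_w_sq_le hθ ha hb hj hx0 hx hy hw k
    rw [← hx, ← hy] at hone
    linear_combination hone + L * herr
  have htel := lyapunov_telescope (E := fun k => f (x k) + h (x k) - (f xstar + h xstar))
    (D := fun k => ‖z k - xstar‖ ^ 2 / (2 * γ)) (by rw [hθ]; norm_num) hθpos
    (one_sub_mul_sq_le_sq hθ) (fun k => sub_nonneg.2 (hmin (x (k + 1)))) hdecrease K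
  have hsum : ∑ k ∈ range (K + 1), c k ≤ 0 :=
    sum_delay_correction_nonpos (fun m => sq_nonneg _) hL.le hγ hstep (K + 1)
  have hD : 0 ≤ ‖z (K + 1) - xstar‖ ^ 2 / (2 * γ) := by positivity
  have hE : (f (x (K + 1)) + h (x (K + 1)) - (f xstar + h xstar)) / θ K ^ 2
      ≤ ‖z 0 - xstar‖ ^ 2 / (2 * γ) := by linarith
  rw [div_le_iff₀ (pow_pos (hθpos K) 2)] at hE
  linear_combination hE

/-- AAGD (Accelerated Asynchronous Gradient Descent) with momentum compensation,
non-strongly convex case: with `θ^k = 2/(k+2)`, step size satisfying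
`2γL + 3γL(τ²+3τ)² ≤ 1`, and serial first `τ` iterations, one has
`F(x^{K+1}) − F(x^*) ≤ (θ^K)² (1/(2γ)) ‖z^0 − x^*‖²`. -/
theorem aagd_nonstrongly_convex
    {H : Type*} [NormedAddCommGroup H] [InnerProductSpace ℝ H] [CompleteSpace H]
    (f h : H → ℝ) (f' : H → H) (L : ℝ) (hL : 0 < L)
    (hf_conv : ConvexOn ℝ Set.univ f)
    (hf_grad : ∀ u, HasGradientAt f (f' u) u)
    (hf_lip : ∀ u v, ‖f' u - f' v‖ ≤ L * ‖u - v‖)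
    (hh_conv : ConvexOn ℝ Set.univ h)
    (xstar : H) (hmin : ∀ u, f xstar + h xstar ≤ f u + h u)
    (γ : ℝ) (hγ : 0 < γ)
    (τ : ℕ) (hτ : 1 ≤ τ)
    (j : ℕ → ℕ) (hj : ∀ k, k - τ ≤ j k ∧ j k ≤ k)
    (θ a : ℕ → ℝ) (b : ℕ → ℕ → ℝ)
    (hθ : ∀ k, θ k = 2 / ((k : ℝ) + 2))
    (hθ_range : ∀ k, 0 < θ k ∧ θ k ≤ 1)
    (ha0 : a 0 = 0)
    (ha : ∀ k, 1 ≤ k → a k = θ k * (1 - θ (k - 1)) / θ (k - 1))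
    (hb : ∀ l k, b l k = ∏ i ∈ Finset.Icc l k, a i)
    (x z y w : ℕ → H)
    (hx0 : x 0 = z 0)
    (hy : ∀ k, y k = (1 - θ k) • x k + θ k • z k)
    (hw : ∀ k, w k = x (j k)
        + (∑ i ∈ Finset.Icc (j k) k, b (j k) i) • (x (j k) - x (j k - 1)))
    (hz : ∀ k, ∀ u : H,
      h (z (k + 1)) + ⟪f' (w k), z (k + 1) - z k⟫
          + θ k / (2 * γ) * ‖z (k + 1) - z k‖ ^ 2
        ≤ h u + ⟪f' (w k), u - z k⟫ + θ k / (2 * γ) * ‖u - z k‖ ^ 2)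
    (hx : ∀ k, x (k + 1) = θ k • z (k + 1) + (1 - θ k) • x k)
    (hserial : ∀ k, k < τ → j k = k)
    (hstep : 2 * γ * L + 3 * γ * L * ((τ : ℝ) ^ 2 + 3 * τ) ^ 2 ≤ 1) :
    ∀ K : ℕ, (f (x (K + 1)) + h (x (K + 1))) - (f xstar + h xstar)
      ≤ (θ K) ^ 2 * (1 / (2 * γ) * ‖z 0 - xstar‖ ^ 2) :=
  aagd_nonstrongly_convex_general f h f' L hL hf_conv hf_grad hf_lip hh_conv xstar hmin γ hγ τ j hj
    θ a b hθ ha hb x z y w hx0 hy hw hz hx hstep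
end

section
/- For all integers 1 ≤ j ≤ k: y^k = x^j + ( Σ_{i=j}^{k} b(j, i) ) (x^j − x^{j−1}) + Σ_{i=j+1}^{k} ( 1 + Σ_{l=i}^{k} b(i, l) ) (x^i − y^{i−1}). Equivalently, setting w^j := x^j + (Σ_{i=j}^{k} b(j,i))(x^j − x^{j−1}), one has y^k − w^j = Σ_{i=j+1}^{k} (1 + Σ_{l=i}^{k} b(i,l)) (x^i − y^{i−1}). -/
lemma momentum_aux
    {H : Type*} [AddCommGroup H] [Module ℝ H]
    (x y : ℕ → H) (a : ℕ → ℝ)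
    (hrec : ∀ k, 1 ≤ k → y k = x k + a k • (x k - x (k - 1)))
    (b : ℕ → ℕ → ℝ) (hb : ∀ l k, b l k = ∏ i ∈ Finset.Icc l k, a i) :
    ∀ j k : ℕ, 1 ≤ j → j ≤ k →
      y k - x k = b j k • (x j - x (j - 1))
        + ∑ i ∈ Finset.Icc (j + 1) k, b i k • (x i - y (i - 1)) := by
  intro j k hj hjk
  induction k, hjk using Nat.le_induction with
  | base =>
    rw [hb, Finset.Icc_self, Finset.prod_singleton, hrec j hj]
    simp
  | succ k hk ih =>
    have h1 : (1:ℕ) ≤ k + 1 := Nat.le_add_left 1 k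
    have hsum : ∑ i ∈ Finset.Icc (j + 1) (k+1), b i (k+1) • (x i - y (i - 1))
        = a (k+1) • (∑ i ∈ Finset.Icc (j + 1) k, b i k • (x i - y (i - 1)))
          + a (k+1) • (x (k+1) - y k) := by
      rw [Finset.sum_Icc_succ_top (by omega : j + 1 ≤ k + 1), Finset.smul_sum]
      congr 1
      · apply Finset.sum_congr rfl
        intro i hi
        have hik : i ≤ k := (Finset.mem_Icc.mp hi).2
        rw [hb, hb, Finset.prod_Icc_succ_top (by omega : i ≤ k + 1), mul_comm,
          mul_smul]
      · rw [hb, Finset.Icc_self, Finset.prod_singleton]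
        simp
    have hbk : b j (k+1) = a (k+1) * b j k := by
      rw [hb, hb, Finset.prod_Icc_succ_top (by omega : j ≤ k + 1), mul_comm]
    rw [hsum, hbk, hrec (k+1) h1]
    simp only [Nat.add_sub_cancel]
    calc x (k+1) + a (k+1) • (x (k+1) - x k) - x (k+1)
        = a (k+1) • (x (k+1) - y k) + a (k+1) • (y k - x k) := by module
      _ = a (k+1) • (x (k+1) - y k) + a (k+1) • (b j k • (x j - x (j - 1))
            + ∑ i ∈ Finset.Icc (j + 1) k, b i k • (x i - y (i - 1))) := by rw [ih]
      _ = (a (k+1) * b j k) • (x j - x (j - 1))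
            + (a (k+1) • (∑ i ∈ Finset.Icc (j + 1) k, b i k • (x i - y (i - 1)))
              + a (k+1) • (x (k+1) - y k)) := by module

/-- Momentum telescoping identity: if `y^k = x^k + a^k (x^k − x^{k−1})` for all `k ≥ 1`
and `b(l,k) = ∏_{i=l}^{k} a^i`, then for all `1 ≤ j ≤ k`,
`y^k = x^j + (Σ_{i=j}^{k} b(j,i))(x^j − x^{j−1})
      + Σ_{i=j+1}^{k} (1 + Σ_{l=i}^{k} b(i,l)) (x^i − y^{i−1})`. -/
theorem momentum_telescoping
    {H : Type*} [AddCommGroup H] [Module ℝ H]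
    (x y : ℕ → H) (a : ℕ → ℝ)
    (hrec : ∀ k, 1 ≤ k → y k = x k + a k • (x k - x (k - 1)))
    (b : ℕ → ℕ → ℝ) (hb : ∀ l k, b l k = ∏ i ∈ Finset.Icc l k, a i) :
    ∀ j k : ℕ, 1 ≤ j → j ≤ k →
      y k = x j + (∑ i ∈ Finset.Icc j k, b j i) • (x j - x (j - 1))
        + ∑ i ∈ Finset.Icc (j + 1) k,
            (1 + ∑ l ∈ Finset.Icc i k, b i l) • (x i - y (i - 1)) := by
  intro j k hj hjk
  induction k, hjk using Nat.le_induction with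
  | base =>
    rw [Finset.Icc_self, Finset.sum_singleton, hb, Finset.Icc_self,
      Finset.prod_singleton, hrec j hj]
    simp
  | succ k hk ih =>
    have haux := momentum_aux x y a hrec b hb j k hj hk
    have h1 : (1:ℕ) ≤ k + 1 := Nat.le_add_left 1 k
    have hbkk : b (k+1) (k+1) = a (k+1) := by
      rw [hb, Finset.Icc_self, Finset.prod_singleton]
    have hc1 : (∑ i ∈ Finset.Icc j (k+1), b j i)
        = (∑ i ∈ Finset.Icc j k, b j i) + b j k * a (k+1) := by
      rw [Finset.sum_Icc_succ_top (by omega : j ≤ k + 1), hb, hb,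
        Finset.prod_Icc_succ_top (by omega : j ≤ k + 1)]
    have hc2 : ∑ i ∈ Finset.Icc (j + 1) (k+1),
          (1 + ∑ l ∈ Finset.Icc i (k+1), b i l) • (x i - y (i - 1))
        = (∑ i ∈ Finset.Icc (j + 1) k,
            (1 + ∑ l ∈ Finset.Icc i k, b i l) • (x i - y (i - 1)))
          + a (k+1) • (∑ i ∈ Finset.Icc (j + 1) k, b i k • (x i - y (i - 1)))
          + (1 + a (k+1)) • (x (k+1) - y k) := by
      rw [Finset.sum_Icc_succ_top (by omega : j + 1 ≤ k + 1), Finset.smul_sum,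
        ← Finset.sum_add_distrib]
      congr 1
      · apply Finset.sum_congr rfl
        intro i hi
        have hik : i ≤ k := (Finset.mem_Icc.mp hi).2
        rw [Finset.sum_Icc_succ_top (by omega : i ≤ k + 1),
          show b i (k+1) = a (k+1) * b i k by
            rw [hb, hb, Finset.prod_Icc_succ_top (by omega : i ≤ k + 1), mul_comm]]
        rw [smul_smul]
        module
      · rw [Finset.Icc_self, Finset.sum_singleton, hbkk]
        norm_num
    rw [hc1, hc2]
    calc y (k+1) = x (k+1) + a (k+1) • (x (k+1) - x k) := by
          rw [hrec (k+1) h1]; simp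
      _ = y k + a (k+1) • (y k - x k) + (1 + a (k+1)) • (x (k+1) - y k) := by module
      _ = (x j + (∑ i ∈ Finset.Icc j k, b j i) • (x j - x (j - 1))
            + ∑ i ∈ Finset.Icc (j + 1) k,
                (1 + ∑ l ∈ Finset.Icc i k, b i l) • (x i - y (i - 1)))
          + a (k+1) • (b j k • (x j - x (j - 1))
            + ∑ i ∈ Finset.Icc (j + 1) k, b i k • (x i - y (i - 1)))
          + (1 + a (k+1)) • (x (k+1) - y k) := by rw [← ih, ← haux]
      _ = x j + ((∑ i ∈ Finset.Icc j k, b j i) + b j k * a (k+1)) • (x j - x (j - 1))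
          + ((∑ i ∈ Finset.Icc (j + 1) k,
                (1 + ∑ l ∈ Finset.Icc i k, b i l) • (x i - y (i - 1)))
            + a (k+1) • (∑ i ∈ Finset.Icc (j + 1) k, b i k • (x i - y (i - 1)))
            + (1 + a (k+1)) • (x (k+1) - y k)) := by module
end

section
/- Let γ > 0, C₁ > 0 and let y, w, x⁺, ξ ∈ H satisfy the optimality relation x⁺ − y + γ∇f(w) + γξ = 0. Then f(x⁺) ≤ f(y) − γ(1 − γL/2) ‖(x⁺ − y)/γ‖² − ⟨ξ, x⁺ − y⟩ + (γL²/(2C₁)) ‖w − y‖² + (γC₁/2) ‖(x⁺ − y)/γ‖². -/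
/-!
Apply the descent lemma `f x⁺ ≤ f y + ⟪∇f(y), x⁺ - y⟫ + L/2 ‖x⁺ - y‖²` and split
`∇f(y) = ∇f(w) + (∇f(y) - ∇f(w))`. Pairing the optimality relation with `x⁺ - y` evaluates
the `∇f(w)` term as `-‖x⁺ - y‖²/γ - ⟪ξ, x⁺ - y⟫`; the remaining term is at most
`L ‖w - y‖ ‖x⁺ - y‖` by Cauchy–Schwarz and the Lipschitz bound, and Young's inequality with
weight `γ/C₁` splits it into the two remaining squares.
-/

open scoped RealInnerProductSpace

theorem two_mul_mul_le_mul_sq_add_sq_div {a b c : ℝ} (hc : 0 < c) :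
    2 * a * b ≤ c * a ^ 2 + b ^ 2 / c := by
  have key : c * (2 * a * b) ≤ c * (c * a ^ 2 + b ^ 2 / c) := by
    rw [mul_add, mul_div_cancel₀ _ hc.ne']
    nlinarith [sq_nonneg (c * a - b)]
  exact le_of_mul_le_mul_left key hc

section LipschitzGradient

variable {H : Type*} [NormedAddCommGroup H] [InnerProductSpace ℝ H]
  {f : H → ℝ} {f' : H → H} {L : ℝ}

theorem inner_sub_le_of_lipschitz (hlip : ∀ u v, ‖f' u - f' v‖ ≤ L * ‖u - v‖) (u v z : H) :
    ⟪f' u - f' v, z⟫ ≤ L * ‖u - v‖ * ‖z‖ :=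
  (real_inner_le_norm _ _).trans (mul_le_mul_of_nonneg_right (hlip u v) (norm_nonneg z))

theorem le_add_inner_add_of_lipschitz_gradient
    (hgrad : ∀ u, HasFDerivAt f ((innerSL ℝ (f' u)) : H →L[ℝ] ℝ) u)
    (hlip : ∀ u v, ‖f' u - f' v‖ ≤ L * ‖u - v‖) (y x : H) :
    f x ≤ f y + ⟪f' y, x - y⟫ + L / 2 * ‖x - y‖ ^ 2 := by
  set v := x - y
  -- the gap between `f` and its quadratic upper model, along the segment from `y` to `x`
  let φ : ℝ → ℝ := fun t => f (y + t • v) - t * ⟪f' y, v⟫ - t ^ 2 * (L / 2 * ‖v‖ ^ 2)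
  have hφ : ∀ t, HasDerivAt φ (⟪f' (y + t • v), v⟫ - ⟪f' y, v⟫ - t * (L * ‖v‖ ^ 2)) t := by
    intro t
    have hline : HasDerivAt (fun t : ℝ => y + t • v) v t := by
      simpa using ((hasDerivAt_id t).smul_const v).const_add y
    have hf := (hgrad (y + t • v)).comp_hasDerivAt t hline
    have hlin := (hasDerivAt_id t).mul_const ⟪f' y, v⟫
    have hquad := (hasDerivAt_pow 2 t).mul_const (L / 2 * ‖v‖ ^ 2)
    refine ((hf.sub hlin).sub hquad).congr_deriv ?_
    simp only [innerSL_apply_apply, one_mul, Nat.cast_ofNat]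
    ring
  have hφ_nonpos : ∀ t ∈ interior (Set.Ici (0 : ℝ)),
      ⟪f' (y + t • v), v⟫ - ⟪f' y, v⟫ - t * (L * ‖v‖ ^ 2) ≤ 0 := by
    intro t ht
    rw [interior_Ici, Set.mem_Ioi] at ht
    have h := inner_sub_le_of_lipschitz hlip (y + t • v) y v
    rw [add_sub_cancel_left, norm_smul, Real.norm_of_nonneg ht.le, inner_sub_left] at h
    nlinarith
  have hmono : AntitoneOn φ (Set.Ici 0) :=
    antitoneOn_of_hasDerivWithinAt_nonpos (convex_Ici 0)
      (fun t _ => (hφ t).continuousAt.continuousWithinAt)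
      (fun t _ => (hφ t).hasDerivWithinAt) hφ_nonpos
  have key : φ 1 ≤ φ 0 :=
    hmono (Set.mem_Ici.2 le_rfl) (Set.mem_Ici.2 zero_le_one) zero_le_one
  simp only [φ, v, one_smul, zero_smul, add_zero, one_mul, zero_mul, sq,
    add_sub_cancel] at key
  linarith

theorem inner_sub_le_young_of_lipschitz (hlip : ∀ u v, ‖f' u - f' v‖ ≤ L * ‖u - v‖)
    {γ C : ℝ} (hγ : 0 < γ) (hC : 0 < C) (y w v : H) :
    ⟪f' y - f' w, v⟫ ≤ γ * L ^ 2 / (2 * C) * ‖w - y‖ ^ 2 + C / (2 * γ) * ‖v‖ ^ 2 := by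
  have hyoung := two_mul_mul_le_mul_sq_add_sq_div (a := L * ‖w - y‖) (b := ‖v‖)
    (div_pos hγ hC)
  have h := inner_sub_le_of_lipschitz hlip y w v
  rw [norm_sub_rev] at h
  calc ⟪f' y - f' w, v⟫ ≤ L * ‖w - y‖ * ‖v‖ := h
    _ ≤ (γ / C * (L * ‖w - y‖) ^ 2 + ‖v‖ ^ 2 / (γ / C)) / 2 := by linarith
    _ = _ := by field_simp

end LipschitzGradient

theorem aagd_descent_step_general
    {H : Type*} [NormedAddCommGroup H] [InnerProductSpace ℝ H]
    (f : H → ℝ) (f' : H → H) (L : ℝ)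
    (hgrad : ∀ u, HasFDerivAt f ((innerSL ℝ (f' u)) : H →L[ℝ] ℝ) u)
    (hlip : ∀ u v, ‖f' u - f' v‖ ≤ L * ‖u - v‖)
    (γ C₁ : ℝ) (hγ : 0 < γ) (hC₁ : 0 < C₁)
    (y w xp ξ : H)
    (hopt : xp - y + γ • f' w + γ • ξ = 0) :
    f xp ≤ f y - γ * (1 - γ * L / 2) * ‖(1 / γ) • (xp - y)‖ ^ 2
      - ⟪ξ, xp - y⟫ + γ * L ^ 2 / (2 * C₁) * ‖w - y‖ ^ 2
      + γ * C₁ / 2 * ‖(1 / γ) • (xp - y)‖ ^ 2 := by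
  set v := xp - y
  have hdescent : f xp ≤ f y + ⟪f' y, v⟫ + L / 2 * ‖v‖ ^ 2 :=
    le_add_inner_add_of_lipschitz_gradient hgrad hlip y xp
  have hcross := inner_sub_le_young_of_lipschitz hlip hγ hC₁ y w v
  have hpair : ‖v‖ ^ 2 + γ * ⟪f' w, v⟫ + γ * ⟪ξ, v⟫ = 0 := by
    have h := congrArg (fun z => ⟪z, v⟫) hopt
    simpa only [inner_add_left, real_inner_smul_left, real_inner_self_eq_norm_sq,
      inner_zero_left] using h
  have hsplit : ⟪f' y, v⟫ = ⟪f' w, v⟫ + ⟪f' y - f' w, v⟫ := by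
    rw [inner_sub_left]; ring
  have hscaled : ‖(1 / γ) • v‖ ^ 2 = ‖v‖ ^ 2 / γ ^ 2 := by
    rw [norm_smul, mul_pow, Real.norm_eq_abs, sq_abs]; ring
  have hfw : ⟪f' w, v⟫ = -(‖v‖ ^ 2 / γ) - ⟪ξ, v⟫ := by
    field_simp; linarith
  have hdescent_coeff : γ * (1 - γ * L / 2) * (‖v‖ ^ 2 / γ ^ 2) = ‖v‖ ^ 2 / γ - L / 2 * ‖v‖ ^ 2 := by
    field_simp
  have hyoung_coeff : γ * C₁ / 2 * (‖v‖ ^ 2 / γ ^ 2) = C₁ / (2 * γ) * ‖v‖ ^ 2 := by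
    field_simp
  rw [hscaled, hdescent_coeff, hyoung_coeff]
  linarith

/-- Descent-type inequality for a delayed-gradient proximal step: if
`x⁺ − y + γ∇f(w) + γξ = 0` and `∇f` is `L`-Lipschitz, then
`f(x⁺) ≤ f(y) − γ(1 − γL/2)‖(x⁺−y)/γ‖² − ⟨ξ, x⁺−y⟩
        + (γL²/(2C₁))‖w−y‖² + (γC₁/2)‖(x⁺−y)/γ‖²`. -/
theorem aagd_descent_step
    {H : Type*} [NormedAddCommGroup H] [InnerProductSpace ℝ H]
    (f : H → ℝ) (f' : H → H) (L : ℝ) (hL : 0 < L)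
    (hgrad : ∀ u, HasFDerivAt f ((innerSL ℝ (f' u)) : H →L[ℝ] ℝ) u)
    (hlip : ∀ u v, ‖f' u - f' v‖ ≤ L * ‖u - v‖)
    (γ C₁ : ℝ) (hγ : 0 < γ) (hC₁ : 0 < C₁)
    (y w xp ξ : H)
    (hopt : xp - y + γ • f' w + γ • ξ = 0) :
    f xp ≤ f y - γ * (1 - γ * L / 2) * ‖(1 / γ) • (xp - y)‖ ^ 2
      - ⟪ξ, xp - y⟫ + γ * L ^ 2 / (2 * C₁) * ‖w - y‖ ^ 2
      + γ * C₁ / 2 * ‖(1 / γ) • (xp - y)‖ ^ 2 :=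
  aagd_descent_step_general f f' L hgrad hlip γ C₁ hγ hC₁ y w xp ξ hopt
end

section
/- Let γ > 0, θ ∈ [0,1], and let x, z, z⁺, w, x^*, ξ ∈ H satisfy θ(z⁺ − z) + γ∇f(w) + γξ = 0; set y := (1 − θ)x + θz and x⁺ := y + θ(z⁺ − z). Then (1/(2γ)) ‖θz⁺ − θx^*‖² ≤ (1/(2γ)) ‖θz − θx^*‖² + (1/(2γ)) ‖x⁺ − y‖² − ⟨ξ, θz − θx^*⟩ + (1 − θ) f(x) + θ f(x^*) − f(y) + ⟨∇f(y) − ∇f(w), y − w⟩. -/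
/-!
Write `a = θz − θx*` and `d = θ(z⁺ − z) = −γ(∇f(w) + ξ)`. Expanding `‖a + d‖²` turns the claim into
`−⟪∇f(w), a⟫ ≤ (1 − θ) f(x) + θ f(x*) − f(y) + ⟪∇f(y) − ∇f(w), y − w⟫`. Since `a = y − u` with
`u = (1 − θ)x + θx*`, this is the three-point inequality
`⟪∇f(w), u − y⟫ ≤ f(u) − f(y) + ⟪∇f(y) − ∇f(w), y − w⟫` (the first-order convexity inequality at `w`
towards `u` and at `y` towards `w`), followed by Jensen's inequality `f(u) ≤ (1 − θ) f(x) + θ f(x*)`.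
-/

open scoped RealInnerProductSpace

theorem ConvexOn.add_fderiv_le {E : Type*} [NormedAddCommGroup E] [NormedSpace ℝ E]
    {s : Set E} {f : E → ℝ} {f' : E →L[ℝ] ℝ} {a b : E}
    (hf : ConvexOn ℝ s f) (ha : a ∈ s) (hb : b ∈ s) (hfa : HasFDerivAt f f' a) :
    f a + f' (b - a) ≤ f b := by
  have hline : ConvexOn ℝ (AffineMap.lineMap a b ⁻¹' s) (f ∘ AffineMap.lineMap a b) :=
    hf.comp_affineMap _
  have hderiv : HasDerivAt (f ∘ AffineMap.lineMap a b) (f' (b - a)) (0 : ℝ) := by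
    have := AffineMap.lineMap_apply_zero (k := ℝ) a b
    exact (this ▸ hfa).comp_hasDerivAt 0 AffineMap.hasDerivAt_lineMap
  have := hline.le_slope_of_hasDerivAt (x := 0) (y := 1) (by simpa using ha) (by simpa using hb)
    zero_lt_one hderiv
  simp only [slope_def_field, Function.comp_apply, AffineMap.lineMap_apply_zero,
    AffineMap.lineMap_apply_one, sub_zero, div_one] at this
  linarith

section Gradient

variable {H : Type*} [NormedAddCommGroup H] [InnerProductSpace ℝ H]
  {f : H → ℝ} {f' : H → H}

theorem ConvexOn.add_inner_le_of_hasFDerivAt {g a : H} (hf : ConvexOn ℝ Set.univ f)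
    (hfa : HasFDerivAt f (innerSL ℝ g) a) (b : H) :
    f a + ⟪g, b - a⟫ ≤ f b :=
  hf.add_fderiv_le (Set.mem_univ a) (Set.mem_univ b) hfa

theorem ConvexOn.inner_gradient_sub_le (hf : ConvexOn ℝ Set.univ f)
    (hgrad : ∀ u, HasFDerivAt f (innerSL ℝ (f' u)) u) (u y w : H) :
    ⟪f' w, u - y⟫ ≤ f u - f y + ⟪f' y - f' w, y - w⟫ := by
  have hw := hf.add_inner_le_of_hasFDerivAt (hgrad w) u
  have hy := hf.add_inner_le_of_hasFDerivAt (hgrad y) w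
  have hsplit : ⟪f' w, u - y⟫ = ⟪f' w, u - w⟫ - ⟪f' w, y - w⟫ := by
    rw [← inner_sub_right, sub_sub_sub_cancel_right]
  have hflip : ⟪f' y, w - y⟫ = -⟪f' y, y - w⟫ := by
    rw [← inner_neg_right, neg_sub]
  rw [hsplit, inner_sub_left]
  linarith

end Gradient

theorem one_div_two_mul_norm_add_sq_of_eq_neg_smul {H : Type*} [NormedAddCommGroup H]
    [InnerProductSpace ℝ H] {γ : ℝ} (hγ : γ ≠ 0) {a d g : H} (hd : d = -(γ • g)) :
    1 / (2 * γ) * ‖a + d‖ ^ 2 = 1 / (2 * γ) * ‖a‖ ^ 2 + 1 / (2 * γ) * ‖d‖ ^ 2 - ⟪g, a⟫ := by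
  have hinner : ⟪a, d⟫ = -(γ * ⟪g, a⟫) := by
    rw [hd, inner_neg_right, real_inner_smul_right, real_inner_comm]
  rw [norm_add_sq_real, hinner]
  field_simp
  ring

/-- Mirror-descent-type inequality for a delayed-gradient step: with
`θ(z⁺ − z) + γ∇f(w) + γξ = 0`, `y = (1−θ)x + θz` and `x⁺ = y + θ(z⁺ − z)`,
`(1/(2γ))‖θz⁺ − θx^*‖² ≤ (1/(2γ))‖θz − θx^*‖² + (1/(2γ))‖x⁺ − y‖² − ⟨ξ, θz − θx^*⟩
  + (1−θ)f(x) + θf(x^*) − f(y) + ⟨∇f(y) − ∇f(w), y − w⟩`. -/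
theorem aagd_mirror_step
    {H : Type*} [NormedAddCommGroup H] [InnerProductSpace ℝ H]
    (f : H → ℝ) (f' : H → H)
    (hconv : ConvexOn ℝ Set.univ f)
    (hgrad : ∀ u, HasFDerivAt f ((innerSL ℝ (f' u)) : H →L[ℝ] ℝ) u)
    (γ θ : ℝ) (hγ : 0 < γ) (hθ0 : 0 ≤ θ) (hθ1 : θ ≤ 1)
    (x z zp w xstar ξ : H)
    (hopt : θ • (zp - z) + γ • f' w + γ • ξ = 0) :
    1 / (2 * γ) * ‖θ • zp - θ • xstar‖ ^ 2
      ≤ 1 / (2 * γ) * ‖θ • z - θ • xstar‖ ^ 2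
        + 1 / (2 * γ) * ‖(((1 - θ) • x + θ • z) + θ • (zp - z)) - ((1 - θ) • x + θ • z)‖ ^ 2
        - ⟪ξ, θ • z - θ • xstar⟫
        + (1 - θ) * f x + θ * f xstar - f ((1 - θ) • x + θ • z)
        + ⟪f' ((1 - θ) • x + θ • z) - f' w, ((1 - θ) • x + θ • z) - w⟫ := by
  set y := (1 - θ) • x + θ • z
  have hstep : θ • (zp - z) = -(γ • (f' w + ξ)) := by
    rw [smul_add]
    exact eq_neg_of_add_eq_zero_left (by rwa [← add_assoc])
  have hexpand := one_div_two_mul_norm_add_sq_of_eq_neg_smul (a := θ • z - θ • xstar) hγ.ne' hstep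
  have hthree := hconv.inner_gradient_sub_le hgrad ((1 - θ) • x + θ • xstar) y w
  have hjensen : f ((1 - θ) • x + θ • xstar) ≤ (1 - θ) * f x + θ * f xstar :=
    hconv.2 (Set.mem_univ x) (Set.mem_univ xstar) (sub_nonneg.2 hθ1) hθ0 (sub_add_cancel 1 θ)
  have hu : (1 - θ) • x + θ • xstar - y = -(θ • z - θ • xstar) := by module
  rw [hu, inner_neg_right] at hthree
  rw [show θ • zp - θ • xstar = (θ • z - θ • xstar) + θ • (zp - z) by module,
    add_sub_cancel_left, hexpand, inner_add_left]
  linarith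
end

section
/- Let γ > 0, C₁ > 0, θ ∈ (0,1], and let x, z, z⁺, w, x^*, ξ ∈ H satisfy: θ(z⁺ − z) + γ∇f(w) + γξ = 0; ξ is a μ-strong subgradient of h at z⁺, i.e. h(u) ≥ h(z⁺) + ⟨ξ, u − z⁺⟩ + (μ/2)‖u − z⁺‖² for every u ∈ H; y := (1 − θ)x + θz and x⁺ := θz⁺ + (1 − θ)x. Then F(x⁺) ≤ (1 − θ)F(x) + θF(x^*) − γ(1/2 − γL/2 − C₁/2) ‖(x⁺ − y)/γ‖² + ( γL²/(2C₁) + L ) ‖w − y‖² + (1/(2γ)) ‖θz − θx^*‖² − ( 1/(2γ) + μ/(2θ) ) ‖θz⁺ − θx^*‖². -/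
open scoped RealInnerProductSpace

/-!
Write `y = (1 - θ)x + θz`, `x⁺ = θz⁺ + (1 - θ)x` and `g = ∇f(w) + ξ`, so that
`x⁺ - y = θ(z⁺ - z) = -γg`. Two applications of the descent lemma (from `w` to `y` and from `y`
to `x⁺`), with the gradient mismatch `⟪∇f(y) - ∇f(w), x⁺ - y⟫` absorbed by Lipschitz continuity
and Young's inequality, bound `f(x⁺)` by the linearization of `f` at `w` plus quadratic errors in
`‖x⁺ - y‖` and `‖w - y‖`. That linearization and `h(x⁺)` are split along
`x⁺ = θz⁺ + (1 - θ)x` and compared with `F(x)` and `F(x^*)` by convexity of `f` and the strong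
subgradient inequality of `h` at `z⁺`. What remains is `θ⟪g, z⁺ - x^*⟫`, which the three-point
identity for `θz`, `θz⁺`, `θx^*` turns into the telescoping terms `‖θz - θx^*‖²`,
`‖θz⁺ - θx^*‖²` minus `‖x⁺ - y‖² / (2γ)`.
-/

section

variable {H : Type*} [NormedAddCommGroup H] [InnerProductSpace ℝ H] {f : H → ℝ} {f' : H → H}

theorem hasDerivAt_comp_add_smul
    (hgrad : ∀ u, HasFDerivAt f ((innerSL ℝ (f' u)) : H →L[ℝ] ℝ) u) (a v : H) (t : ℝ) :
    HasDerivAt (fun s : ℝ => f (a + s • v)) ⟪f' (a + t • v), v⟫ t := by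
  have hline : HasDerivAt (fun s : ℝ => a + s • v) v t := by
    simpa using ((hasDerivAt_id t).smul_const v).const_add a
  exact (hgrad _).comp_hasDerivAt t hline

theorem ConvexOn.add_inner_le (hf : ConvexOn ℝ Set.univ f)
    (hgrad : ∀ u, HasFDerivAt f ((innerSL ℝ (f' u)) : H →L[ℝ] ℝ) u) (a b : H) :
    f a + ⟪f' a, b - a⟫ ≤ f b := by
  have hline : ConvexOn ℝ Set.univ (fun s : ℝ => f (a + s • (b - a))) := by
    simpa [Function.comp_def, AffineMap.lineMap_apply, add_comm] using
      hf.comp_affineMap (AffineMap.lineMap a b)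
  have hslope := hline.le_slope_of_hasDerivAt (Set.mem_univ 0) (Set.mem_univ 1) one_pos
    (by simpa using hasDerivAt_comp_add_smul hgrad a (b - a) 0)
  simp only [slope_def_field, one_smul, zero_smul, add_zero, add_sub_cancel, sub_zero,
    div_one] at hslope
  linarith

theorem le_add_inner_add_sq_of_lipschitz {L : ℝ}
    (hgrad : ∀ u, HasFDerivAt f ((innerSL ℝ (f' u)) : H →L[ℝ] ℝ) u)
    (hlip : ∀ u v, ‖f' u - f' v‖ ≤ L * ‖u - v‖) (a b : H) :
    f b ≤ f a + ⟪f' a, b - a⟫ + L / 2 * ‖b - a‖ ^ 2 := by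
  set v := b - a
  -- `φ` has nonpositive derivative on `[0, 1]`, so `φ 1 ≤ φ 0`.
  let φ : ℝ → ℝ := fun t => f (a + t • v) - t * ⟪f' a, v⟫ - L / 2 * ‖v‖ ^ 2 * t ^ 2
  have hφ : ∀ t, HasDerivAt φ (⟪f' (a + t • v) - f' a, v⟫ - L * ‖v‖ ^ 2 * t) t := by
    intro t
    have hlin : HasDerivAt (fun s : ℝ => s * ⟪f' a, v⟫) ⟪f' a, v⟫ t := by
      simpa using hasDerivAt_mul_const ⟪f' a, v⟫
    have hquad : HasDerivAt (fun s : ℝ => L / 2 * ‖v‖ ^ 2 * s ^ 2) (L * ‖v‖ ^ 2 * t) t :=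
      ((hasDerivAt_pow 2 t).const_mul (L / 2 * ‖v‖ ^ 2)).congr_deriv (by norm_num; ring)
    rw [inner_sub_left]
    exact ((hasDerivAt_comp_add_smul hgrad a v t).fun_sub hlin).fun_sub hquad
  have hφ_nonpos : ∀ t ∈ interior (Set.Icc (0 : ℝ) 1),
      ⟪f' (a + t • v) - f' a, v⟫ - L * ‖v‖ ^ 2 * t ≤ 0 := by
    intro t ht
    rw [interior_Icc] at ht
    have : ⟪f' (a + t • v) - f' a, v⟫ ≤ L * ‖v‖ ^ 2 * t :=
      calc ⟪f' (a + t • v) - f' a, v⟫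
          ≤ ‖f' (a + t • v) - f' a‖ * ‖v‖ := real_inner_le_norm _ _
        _ ≤ L * ‖(a + t • v) - a‖ * ‖v‖ := by gcongr; exact hlip _ _
        _ = L * ‖v‖ ^ 2 * t := by
          rw [add_sub_cancel_left, norm_smul, Real.norm_of_nonneg ht.1.le]; ring
    linarith
  have hanti : AntitoneOn φ (Set.Icc 0 1) :=
    antitoneOn_of_hasDerivWithinAt_nonpos (convex_Icc 0 1)
      (fun t _ => (hφ t).continuousAt.continuousWithinAt)
      (fun t _ => (hφ t).hasDerivWithinAt) hφ_nonpos
  have := hanti (Set.left_mem_Icc.2 zero_le_one) (Set.right_mem_Icc.2 zero_le_one) zero_le_one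
  simp only [φ, v, one_smul, zero_smul, add_zero, add_sub_cancel, one_mul, one_pow,
    mul_one, zero_mul, sub_zero, ne_eq, OfNat.ofNat_ne_zero, not_false_eq_true, zero_pow] at this
  linarith

theorem le_add_inner_add_sq_add_sq_of_lipschitz {L ε : ℝ} (hε : 0 < ε)
    (hgrad : ∀ u, HasFDerivAt f ((innerSL ℝ (f' u)) : H →L[ℝ] ℝ) u)
    (hlip : ∀ u v, ‖f' u - f' v‖ ≤ L * ‖u - v‖) (w y v : H) :
    f v ≤ f w + ⟪f' w, v - w⟫ + (L + ε⁻¹) / 2 * ‖v - y‖ ^ 2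
      + (ε * L ^ 2 + L) / 2 * ‖w - y‖ ^ 2 := by
  have hyv := le_add_inner_add_sq_of_lipschitz hgrad hlip y v
  have hwy := le_add_inner_add_sq_of_lipschitz hgrad hlip w y
  have hmismatch : ⟪f' y - f' w, v - y⟫ ≤ ε * L ^ 2 / 2 * ‖w - y‖ ^ 2 + ε⁻¹ / 2 * ‖v - y‖ ^ 2 :=
    calc ⟪f' y - f' w, v - y⟫
        ≤ ‖f' y - f' w‖ * ‖v - y‖ := real_inner_le_norm _ _
      _ ≤ (L * ‖w - y‖) * ‖v - y‖ := by gcongr; rw [norm_sub_rev w]; exact hlip _ _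
      _ ≤ ε * L ^ 2 / 2 * ‖w - y‖ ^ 2 + ε⁻¹ / 2 * ‖v - y‖ ^ 2 := by
        nlinarith [two_mul_le_add_mul_sq (a := L * ‖w - y‖) (b := ‖v - y‖) hε]
  have hsplit : ⟪f' y, v - y⟫ + ⟪f' w, y - w⟫ = ⟪f' y - f' w, v - y⟫ + ⟪f' w, v - w⟫ := by
    rw [inner_sub_left, ← sub_add_sub_cancel v y w, inner_add_right]; ring
  rw [norm_sub_rev y w] at hwy
  linarith

variable {θ : ℝ}

theorem ConvexOn.add_inner_convex_combination_le (hf : ConvexOn ℝ Set.univ f)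
    (hgrad : ∀ u, HasFDerivAt f ((innerSL ℝ (f' u)) : H →L[ℝ] ℝ) u)
    (hθ0 : 0 ≤ θ) (hθ1 : θ ≤ 1) (w p x q : H) :
    f w + ⟪f' w, (θ • p + (1 - θ) • x) - w⟫
      ≤ (1 - θ) * f x + θ * (f q + ⟪f' w, p - q⟫) := by
  have hsplit : (θ • p + (1 - θ) • x) - w = (1 - θ) • (x - w) + θ • (q - w) + θ • (p - q) := by
    module
  have hx : (1 - θ) * (f w + ⟪f' w, x - w⟫) ≤ (1 - θ) * f x :=
    mul_le_mul_of_nonneg_left (hf.add_inner_le hgrad w x) (by linarith)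
  have hq : θ * (f w + ⟪f' w, q - w⟫) ≤ θ * f q :=
    mul_le_mul_of_nonneg_left (hf.add_inner_le hgrad w q) hθ0
  rw [hsplit, inner_add_right, inner_add_right, real_inner_smul_right, real_inner_smul_right,
    real_inner_smul_right]
  linarith

theorem ConvexOn.convex_combination_le_of_strong_subgradient {h : H → ℝ}
    (hh : ConvexOn ℝ Set.univ h) {ξ p : H} {μ : ℝ}
    (hξ : ∀ u : H, h u ≥ h p + ⟪ξ, u - p⟫ + μ / 2 * ‖u - p‖ ^ 2)
    (hθ0 : 0 ≤ θ) (hθ1 : θ ≤ 1) (x q : H) :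
    h (θ • p + (1 - θ) • x)
      ≤ (1 - θ) * h x + θ * (h q + ⟪ξ, p - q⟫ - μ / 2 * ‖q - p‖ ^ 2) := by
  have hconv : h (θ • p + (1 - θ) • x) ≤ θ * h p + (1 - θ) * h x :=
    hh.2 (Set.mem_univ p) (Set.mem_univ x) hθ0 (by linarith) (by ring)
  have hq : θ * (h p + ⟪ξ, q - p⟫ + μ / 2 * ‖q - p‖ ^ 2) ≤ θ * h q :=
    mul_le_mul_of_nonneg_left (hξ q) hθ0
  have hflip : ⟪ξ, q - p⟫ = -⟪ξ, p - q⟫ := by rw [← inner_neg_right, neg_sub]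
  rw [hflip] at hq
  linarith

theorem mul_inner_eq_of_smul_sub_add_smul_eq_zero {γ : ℝ} (hγ : γ ≠ 0) {z p g : H}
    (hstep : θ • (p - z) + γ • g = 0) (q : H) :
    θ * ⟪g, p - q⟫ = (‖θ • z - θ • q‖ ^ 2 - ‖θ • p - θ • q‖ ^ 2 - ‖θ • p - θ • z‖ ^ 2) / (2 * γ) := by
  have hg : γ • g = θ • z - θ • p := by linear_combination (norm := module) hstep
  have hinner : ⟪θ • z - θ • p, θ • p - θ • q⟫ = γ * (θ * ⟪g, p - q⟫) := by
    rw [← hg, ← smul_sub, real_inner_smul_left, real_inner_smul_right]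
  have hthree := norm_add_sq_real (θ • z - θ • p) (θ • p - θ • q)
  rw [sub_add_sub_cancel, hinner, norm_sub_rev (θ • z) (θ • p)] at hthree
  field_simp
  linarith

end

theorem aagd_one_step_contraction_general
    {H : Type*} [NormedAddCommGroup H] [InnerProductSpace ℝ H]
    (f h : H → ℝ) (f' : H → H) (L : ℝ)
    (hf_conv : ConvexOn ℝ Set.univ f)
    (hgrad : ∀ u, HasFDerivAt f ((innerSL ℝ (f' u)) : H →L[ℝ] ℝ) u)
    (hlip : ∀ u v, ‖f' u - f' v‖ ≤ L * ‖u - v‖)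
    (hh_conv : ConvexOn ℝ Set.univ h)
    (μ : ℝ)
    (γ C₁ θ : ℝ) (hγ : 0 < γ) (hC₁ : 0 < C₁) (hθ0 : 0 < θ) (hθ1 : θ ≤ 1)
    (x z zp w xstar ξ : H)
    (hopt : θ • (zp - z) + γ • f' w + γ • ξ = 0)
    (hsubgrad : ∀ u : H, h u ≥ h zp + ⟪ξ, u - zp⟫ + μ / 2 * ‖u - zp‖ ^ 2) :
    f (θ • zp + (1 - θ) • x) + h (θ • zp + (1 - θ) • x)
      ≤ (1 - θ) * (f x + h x) + θ * (f xstar + h xstar)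
        - γ * (1 / 2 - γ * L / 2 - C₁ / 2)
            * ‖(1 / γ) • ((θ • zp + (1 - θ) • x) - ((1 - θ) • x + θ • z))‖ ^ 2
        + (γ * L ^ 2 / (2 * C₁) + L) * ‖w - ((1 - θ) • x + θ • z)‖ ^ 2
        + 1 / (2 * γ) * ‖θ • z - θ • xstar‖ ^ 2
        - (1 / (2 * γ) + μ / (2 * θ)) * ‖θ • zp - θ • xstar‖ ^ 2 := by
  have hf_split := hf_conv.add_inner_convex_combination_le hgrad hθ0.le hθ1 w zp x xstar
  have hh_split := hh_conv.convex_combination_le_of_strong_subgradient hsubgrad hθ0.le hθ1 x xstar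
  set y := (1 - θ) • x + θ • z
  set xp := θ • zp + (1 - θ) • x
  have hf_step := le_add_inner_add_sq_add_sq_of_lipschitz (div_pos hγ hC₁) hgrad hlip w y xp
  have hthree := mul_inner_eq_of_smul_sub_add_smul_eq_zero hγ.ne'
    (by rw [smul_add, ← add_assoc]; exact hopt) xstar
  have hxp_sub_y : θ • zp - θ • z = xp - y := by module
  rw [hxp_sub_y, inner_add_left] at hthree
  have hLwy : 0 ≤ L * ‖w - y‖ ^ 2 := by
    rw [sq, ← mul_assoc]
    exact mul_nonneg ((norm_nonneg _).trans (norm_sub_rev y w ▸ hlip y w)) (norm_nonneg _)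
  have hxp_coef : γ * (1 / 2 - γ * L / 2 - C₁ / 2) * ‖(1 / γ) • (xp - y)‖ ^ 2
      = (1 / (2 * γ) - (L + (γ / C₁)⁻¹) / 2) * ‖xp - y‖ ^ 2 := by
    rw [norm_smul, mul_pow, Real.norm_of_nonneg (by positivity)]
    field_simp
    ring
  have hzp_coef : (1 / (2 * γ) + μ / (2 * θ)) * ‖θ • zp - θ • xstar‖ ^ 2
      = 1 / (2 * γ) * ‖θ • zp - θ • xstar‖ ^ 2 + θ * (μ / 2 * ‖xstar - zp‖ ^ 2) := by
    rw [← smul_sub, norm_smul, mul_pow, Real.norm_of_nonneg hθ0.le, norm_sub_rev]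
    field_simp
  rw [hxp_coef, hzp_coef]
  linear_combination hf_step + hf_split + hh_split + hthree + hLwy / 2

/-- One-step contraction inequality for the momentum-compensated proximal step: with
`θ(z⁺ − z) + γ∇f(w) + γξ = 0`, `ξ` a `μ`-strong subgradient of `h` at `z⁺`,
`y = (1−θ)x + θz` and `x⁺ = θz⁺ + (1−θ)x`, one has
`F(x⁺) ≤ (1−θ)F(x) + θF(x^*) − γ(1/2 − γL/2 − C₁/2)‖(x⁺−y)/γ‖²
  + (γL²/(2C₁) + L)‖w − y‖² + (1/(2γ))‖θz−θx^*‖² − (1/(2γ) + μ/(2θ))‖θz⁺−θx^*‖²`. -/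
theorem aagd_one_step_contraction
    {H : Type*} [NormedAddCommGroup H] [InnerProductSpace ℝ H]
    (f h : H → ℝ) (f' : H → H) (L : ℝ) (hL : 0 < L)
    (hf_conv : ConvexOn ℝ Set.univ f)
    (hgrad : ∀ u, HasFDerivAt f ((innerSL ℝ (f' u)) : H →L[ℝ] ℝ) u)
    (hlip : ∀ u v, ‖f' u - f' v‖ ≤ L * ‖u - v‖)
    (hh_conv : ConvexOn ℝ Set.univ h)
    (μ : ℝ) (hμ : 0 ≤ μ)
    (γ C₁ θ : ℝ) (hγ : 0 < γ) (hC₁ : 0 < C₁) (hθ0 : 0 < θ) (hθ1 : θ ≤ 1)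
    (x z zp w xstar ξ : H)
    (hopt : θ • (zp - z) + γ • f' w + γ • ξ = 0)
    (hsubgrad : ∀ u : H, h u ≥ h zp + ⟪ξ, u - zp⟫ + μ / 2 * ‖u - zp‖ ^ 2) :
    f (θ • zp + (1 - θ) • x) + h (θ • zp + (1 - θ) • x)
      ≤ (1 - θ) * (f x + h x) + θ * (f xstar + h xstar)
        - γ * (1 / 2 - γ * L / 2 - C₁ / 2)
            * ‖(1 / γ) • ((θ • zp + (1 - θ) • x) - ((1 - θ) • x + θ • z))‖ ^ 2
        + (γ * L ^ 2 / (2 * C₁) + L) * ‖w - ((1 - θ) • x + θ • z)‖ ^ 2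
        + 1 / (2 * γ) * ‖θ • z - θ • xstar‖ ^ 2
        - (1 / (2 * γ) + μ / (2 * θ)) * ‖θ • zp - θ • xstar‖ ^ 2 :=
  aagd_one_step_contraction_general f h f' L hf_conv hgrad hlip hh_conv μ γ C₁ θ hγ hC₁ hθ0 hθ1 x z
    zp w xstar ξ hopt hsubgrad
end

section
/- For all integers 1 ≤ j ≤ k with k − j ≤ τ, the momentum-compensated point w^j := x^j + ( Σ_{i=j}^{k} b(j, i) ) (x^j − x^{j−1}) satisfies ‖w^j − y^k‖² ≤ ((τ² + 3τ)/2) · Σ_{i=1}^{min(τ, k)} (i + 1) ‖x^{k−i+1} − y^{k−i}‖². -/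
/-!
The velocities `v n = x (n + 1) - x n` obey the linear recurrence
`v n = a n • v (n - 1) + (x (n + 1) - y n)`, so by variation of constants `x (k + 1) - x j` is the
momentum term `(∑ i ∈ Icc j k, b j i) • (x j - x (j - 1))` plus a combination of the residuals
`x (m + 1) - y m`, `j ≤ m ≤ k`. Since `y k = x (k + 1) - (x (k + 1) - y k)`, the compensated point
differs from `y k` only by the residuals with `j ≤ m < k`, whose weights lie in `[0, k - m + 1]`
because `0 ≤ a ≤ 1`. A weighted Cauchy–Schwarz inequality bounds the squared distance by the total
weight, at most `∑ i ∈ Icc 1 τ, (i + 1) = (τ² + 3τ) / 2`, times the weighted sum of squared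
residuals.
-/

open Finset

section VariationOfConstants

variable {R M : Type*} [CommSemiring R] [AddCommMonoid M] [Module R M]
  {c : ℕ → R} {u f : ℕ → M} {j : ℕ}

theorem variation_of_constants (h : ∀ n, j ≤ n → u (n + 1) = c (n + 1) • u n + f (n + 1))
    {N : ℕ} (hN : j ≤ N) :
    u N = (∏ i ∈ Ioc j N, c i) • u j + ∑ m ∈ Ioc j N, (∏ i ∈ Ioc m N, c i) • f m := by
  induction N, hN using Nat.le_induction with
  | base => simp
  | succ N hN ih =>
    have hprod : ∀ m ∈ Ioc j N, ∏ i ∈ Ioc m (N + 1), c i = c (N + 1) * ∏ i ∈ Ioc m N, c i :=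
      fun m hm => by rw [prod_Ioc_succ_top (mem_Ioc.1 hm).2, mul_comm]
    rw [prod_Ioc_succ_top hN, sum_Ioc_succ_top hN, sum_congr rfl fun m hm => by
      rw [hprod m hm], Ioc_self, prod_empty, one_smul, h N hN, ih]
    simp only [smul_add, smul_sum, mul_smul, mul_comm _ (c (N + 1)), add_assoc]

theorem sum_variation_of_constants (h : ∀ n, j ≤ n → u (n + 1) = c (n + 1) • u n + f (n + 1))
    (K : ℕ) :
    ∑ n ∈ Ioc j K, u n = (∑ n ∈ Ioc j K, ∏ i ∈ Ioc j n, c i) • u j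
      + ∑ m ∈ Ioc j K, (∑ n ∈ Icc m K, ∏ i ∈ Ioc m n, c i) • f m := by
  rw [sum_congr rfl fun n hn => variation_of_constants h (mem_Ioc.1 hn).1.le, sum_add_distrib,
    sum_smul, sum_comm' (t' := Ioc j K) (s' := fun m => Icc m K)]
  · simp only [sum_smul]
  · intro n m
    simp only [mem_Ioc, mem_Icc]
    omega

end VariationOfConstants

section Momentum

variable {R M : Type*} [CommRing R] [AddCommGroup M] [Module R M] {x y : ℕ → M} {a : ℕ → R}

/-- In the paper's notation `compensationCoeff a m k = 1 + ∑_{i=m+1}^{k} b(m+1, i)`: the term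
`n = m` is the empty product. -/
def compensationCoeff (a : ℕ → R) (m k : ℕ) : R := ∑ n ∈ Icc m k, ∏ i ∈ Ioc m n, a i

theorem momentum_compensated_sub_eq (hrec : ∀ k, 1 ≤ k → y k = x k + a k • (x k - x (k - 1)))
    {j k : ℕ} (hj : 1 ≤ j) (hjk : j ≤ k) :
    x j + (∑ i ∈ Icc j k, ∏ l ∈ Icc j i, a l) • (x j - x (j - 1)) - y k
      = -∑ m ∈ Ico j k, compensationCoeff a m k • (x (m + 1) - y m) := by
  obtain ⟨j, rfl⟩ : ∃ j', j = j' + 1 := ⟨j - 1, by omega⟩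
  have hvel : ∀ n, j ≤ n → x (n + 1 + 1) - x (n + 1)
      = a (n + 1) • (x (n + 1) - x n) + (x (n + 1 + 1) - y (n + 1)) := fun n _ => by
    rw [hrec (n + 1) (by omega), Nat.add_sub_cancel]
    abel
  have hsum := sum_variation_of_constants (u := fun n => x (n + 1) - x n)
    (f := fun m => x (m + 1) - y m) hvel k
  have htelescope : ∑ n ∈ Ioc j k, (x (n + 1) - x n) = x (k + 1) - x (j + 1) := by
    rw [← Ico_add_one_add_one_eq_Ioc, sum_Ico_sub x (by omega)]
  have htop : ∑ m ∈ Ioc j k, (∑ n ∈ Icc m k, ∏ i ∈ Ioc m n, a i) • (x (m + 1) - y m)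
      = ∑ m ∈ Ioo j k, compensationCoeff a m k • (x (m + 1) - y m) + (x (k + 1) - y k) := by
    rw [← sum_erase_add _ _ (right_mem_Ioc.2 hjk), Ioc_erase_right]
    simp [compensationCoeff]
  rw [htelescope, htop] at hsum
  simp only [Icc_add_one_left_eq_Ioc, Ico_add_one_left_eq_Ioo, Nat.add_sub_cancel]
  linear_combination (norm := module) -hsum

end Momentum

theorem norm_sum_smul_sq_le {ι E : Type*} [SeminormedAddCommGroup E] [NormedSpace ℝ E]
    (s : Finset ι) {c : ι → ℝ} (v : ι → E) (hc : ∀ i ∈ s, 0 ≤ c i) :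
    ‖∑ i ∈ s, c i • v i‖ ^ 2 ≤ (∑ i ∈ s, c i) * ∑ i ∈ s, c i * ‖v i‖ ^ 2 := by
  have htriangle : ‖∑ i ∈ s, c i • v i‖ ≤ ∑ i ∈ s, c i * ‖v i‖ :=
    norm_sum_le_of_le s fun i hi => (norm_smul_of_nonneg (hc i hi) _).le
  calc ‖∑ i ∈ s, c i • v i‖ ^ 2 ≤ (∑ i ∈ s, c i * ‖v i‖) ^ 2 := by gcongr
    _ ≤ _ := sum_sq_le_sum_mul_sum_of_sq_le_mul s hc
        (fun i hi => mul_nonneg (hc i hi) (sq_nonneg _)) fun i _ => le_of_eq (by ring)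

section Weights

variable {a : ℕ → ℝ} {m k : ℕ}

theorem compensationCoeff_nonneg (ha : ∀ i ∈ Ioc m k, 0 ≤ a i) : 0 ≤ compensationCoeff a m k :=
  sum_nonneg fun _ hn => prod_nonneg fun i hi =>
    ha i (Ioc_subset_Ioc_right (mem_Icc.1 hn).2 hi)

theorem compensationCoeff_le (ha : ∀ i ∈ Ioc m k, 0 ≤ a i ∧ a i ≤ 1) (hmk : m ≤ k) :
    compensationCoeff a m k ≤ (k - m : ℕ) + 1 := by
  have hprod : ∀ n ∈ Icc m k, ∏ i ∈ Ioc m n, a i ≤ 1 := fun n hn =>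
    prod_le_one (fun i hi => (ha i (Ioc_subset_Ioc_right (mem_Icc.1 hn).2 hi)).1)
      fun i hi => (ha i (Ioc_subset_Ioc_right (mem_Icc.1 hn).2 hi)).2
  calc compensationCoeff a m k ≤ #(Icc m k) • (1 : ℝ) := sum_le_card_nsmul _ _ _ hprod
    _ = (k - m : ℕ) + 1 := by
      rw [Nat.card_Icc, nsmul_one, show k + 1 - m = k - m + 1 by omega, Nat.cast_succ]

end Weights

theorem sum_Ico_mul_le_sum_Icc {C ψ : ℕ → ℝ} {j k L : ℕ}
    (hC : ∀ m ∈ Ico j k, C m ≤ (k - m : ℕ) + 1) (hψ : ∀ m, 0 ≤ ψ m) (hL : k - j ≤ L) :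
    ∑ m ∈ Ico j k, C m * ψ m ≤ ∑ i ∈ Icc 1 L, ((i : ℝ) + 1) * ψ (k - i) := by
  calc ∑ m ∈ Ico j k, C m * ψ m ≤ ∑ m ∈ Ico j k, (((k - m : ℕ) : ℝ) + 1) * ψ (k - (k - m)) :=
        sum_le_sum fun m hm => by
          rw [Nat.sub_sub_self (mem_Ico.1 hm).2.le]
          exact mul_le_mul_of_nonneg_right (hC m hm) (hψ m)
    _ = ∑ i ∈ Ico (k + 1 - k) (k + 1 - j), ((i : ℝ) + 1) * ψ (k - i) :=
        sum_Ico_reflect (fun i => ((i : ℝ) + 1) * ψ (k - i)) j (Nat.le_succ k)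
    _ ≤ _ := sum_le_sum_of_subset_of_nonneg
        (fun i hi => by simp only [mem_Ico, mem_Icc] at hi ⊢; omega)
        fun i _ _ => mul_nonneg (by positivity) (hψ _)

theorem sum_Icc_one_natCast_add_one (n : ℕ) :
    ∑ i ∈ Icc 1 n, ((i : ℝ) + 1) = ((n : ℝ) ^ 2 + 3 * n) / 2 := by
  induction n with
  | zero => simp
  | succ n ih =>
    rw [sum_Icc_succ_top (by omega), ih]
    push_cast
    ring

theorem momentum_compensation_distance_bound_general
    {H : Type*} [NormedAddCommGroup H] [InnerProductSpace ℝ H]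
    (x y : ℕ → H) (τ : ℕ)
    (a : ℕ → ℝ) (ha : ∀ k, 1 ≤ k → 0 ≤ a k ∧ a k ≤ 1)
    (hrec : ∀ k, 1 ≤ k → y k = x k + a k • (x k - x (k - 1)))
    (b : ℕ → ℕ → ℝ) (hb : ∀ l k, b l k = ∏ i ∈ Finset.Icc l k, a i) :
    ∀ j k : ℕ, 1 ≤ j → j ≤ k → k - j ≤ τ →
      ‖(x j + (∑ i ∈ Finset.Icc j k, b j i) • (x j - x (j - 1))) - y k‖ ^ 2
        ≤ ((τ : ℝ) ^ 2 + 3 * τ) / 2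
            * ∑ i ∈ Finset.Icc 1 (min τ k), ((i : ℝ) + 1) * ‖x (k - i + 1) - y (k - i)‖ ^ 2 := by
  intro j k hj hjk hkτ
  simp only [hb]
  rw [momentum_compensated_sub_eq hrec hj hjk, norm_neg]
  have ha' : ∀ m ∈ Ico j k, ∀ i ∈ Ioc m k, 0 ≤ a i ∧ a i ≤ 1 := fun m hm i hi =>
    ha i (by simp only [mem_Ico, mem_Ioc] at hm hi; omega)
  have hC0 : ∀ m ∈ Ico j k, 0 ≤ compensationCoeff a m k := fun m hm =>
    compensationCoeff_nonneg fun i hi => (ha' m hm i hi).1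
  have hC : ∀ m ∈ Ico j k, compensationCoeff a m k ≤ (k - m : ℕ) + 1 := fun m hm =>
    compensationCoeff_le (ha' m hm) (mem_Ico.1 hm).2.le
  have hmass : ∑ m ∈ Ico j k, compensationCoeff a m k ≤ ((τ : ℝ) ^ 2 + 3 * τ) / 2 := by
    simpa [sum_Icc_one_natCast_add_one] using
      sum_Ico_mul_le_sum_Icc hC (fun _ => zero_le_one) hkτ
  calc _ ≤ (∑ m ∈ Ico j k, compensationCoeff a m k)
        * ∑ m ∈ Ico j k, compensationCoeff a m k * ‖x (m + 1) - y m‖ ^ 2 :=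
        norm_sum_smul_sq_le _ _ hC0
    _ ≤ _ := mul_le_mul hmass (sum_Ico_mul_le_sum_Icc hC (fun _ => sq_nonneg _) (by omega))
        (sum_nonneg fun m hm => mul_nonneg (hC0 m hm) (sq_nonneg _)) (by positivity)

/-- Bound on the distance between the momentum-compensated point
`w^j = x^j + (Σ_{i=j}^{k} b(j,i))(x^j − x^{j−1})` and the exact extrapolation point `y^k`:
for `1 ≤ j ≤ k` with `k − j ≤ τ`,
`‖w^j − y^k‖² ≤ ((τ²+3τ)/2) Σ_{i=1}^{min(τ,k)} (i+1) ‖x^{k−i+1} − y^{k−i}‖²`. -/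
theorem momentum_compensation_distance_bound
    {H : Type*} [NormedAddCommGroup H] [InnerProductSpace ℝ H]
    (x y : ℕ → H) (τ : ℕ) (hτ : 1 ≤ τ)
    (a : ℕ → ℝ) (ha : ∀ k, 1 ≤ k → 0 ≤ a k ∧ a k ≤ 1)
    (hrec : ∀ k, 1 ≤ k → y k = x k + a k • (x k - x (k - 1)))
    (b : ℕ → ℕ → ℝ) (hb : ∀ l k, b l k = ∏ i ∈ Finset.Icc l k, a i) :
    ∀ j k : ℕ, 1 ≤ j → j ≤ k → k - j ≤ τ →
      ‖(x j + (∑ i ∈ Finset.Icc j k, b j i) • (x j - x (j - 1))) - y k‖ ^ 2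
        ≤ ((τ : ℝ) ^ 2 + 3 * τ) / 2
            * ∑ i ∈ Finset.Icc 1 (min τ k), ((i : ℝ) + 1) * ‖x (k - i + 1) - y (k - i)‖ ^ 2 :=
  momentum_compensation_distance_bound_general x y τ a ha hrec b hb
end

section
/- Assume v_k = 0 for every k < τ and v_k ≤ ((τ² + 3τ)/2) · Σ_{i=1}^{min(τ, k−τ)} (i + 1) u_{k−i} for every k ≥ τ. Then for every K ≥ 0: Σ_{k=0}^{K} ((k+2)²/4) v_k ≤ (τ² + 3τ)² · Σ_{k=0}^{K} ((k+2)²/4) u_k. (Here (k+2)²/4 = 1/(θ^k)² for the choice θ^k = 2/(k+2).) -/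
open Finset

lemma sum_coeff_delayed (τ : ℕ) :
    ∑ i ∈ Finset.Icc 1 τ, ((i : ℝ) + 1) = ((τ : ℝ) ^ 2 + 3 * τ) / 2 := by
  induction τ with
  | zero => simp
  | succ n ih =>
    rw [Finset.sum_Icc_succ_top (by omega), ih]
    push_cast
    ring

/-- Weighted summation of the delayed error terms: if `v_k = 0` for `k < τ` and
`v_k ≤ ((τ²+3τ)/2) Σ_{i=1}^{min(τ,k−τ)} (i+1) u_{k−i}` for `k ≥ τ`, then for every `K ≥ 0`,
`Σ_{k=0}^{K} ((k+2)²/4) v_k ≤ (τ²+3τ)² Σ_{k=0}^{K} ((k+2)²/4) u_k`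
(where `(k+2)²/4 = 1/(θ^k)²` for `θ^k = 2/(k+2)`). -/
theorem delayed_error_summation
    (τ : ℕ) (hτ : 1 ≤ τ) (K : ℕ)
    (u v : ℕ → ℝ) (hu : ∀ k, 0 ≤ u k) (hv : ∀ k, 0 ≤ v k)
    (hv0 : ∀ k, k < τ → v k = 0)
    (hvb : ∀ k, τ ≤ k → v k ≤ ((τ : ℝ) ^ 2 + 3 * τ) / 2
        * ∑ i ∈ Finset.Icc 1 (min τ (k - τ)), ((i : ℝ) + 1) * u (k - i)) :
    ∑ k ∈ Finset.range (K + 1), ((k : ℝ) + 2) ^ 2 / 4 * v k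
      ≤ ((τ : ℝ) ^ 2 + 3 * τ) ^ 2
          * ∑ k ∈ Finset.range (K + 1), ((k : ℝ) + 2) ^ 2 / 4 * u k := by
  set C : ℝ := (τ : ℝ) ^ 2 + 3 * τ with hCdef
  have hC0 : 0 ≤ C := by positivity
  set g : ℕ → ℝ := fun j => ((j : ℝ) + 2) ^ 2 / 4 * u j with hg
  have hg0 : ∀ j, 0 ≤ g j := fun j => mul_nonneg (by positivity) (hu j)
  set G : ℝ := ∑ k ∈ Finset.range (K + 1), ((k : ℝ) + 2) ^ 2 / 4 * u k with hGdef
  have hGg : G = ∑ k ∈ Finset.range (K + 1), g k := rfl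
  -- Step 1
  have step1 : ∑ k ∈ Finset.range (K + 1), ((k : ℝ) + 2) ^ 2 / 4 * v k
      ≤ 2 * C * ∑ k ∈ Finset.range (K + 1),
          ∑ i ∈ Finset.Icc 1 (min τ (k - τ)), ((i : ℝ) + 1) * g (k - i) := by
    rw [Finset.mul_sum]
    apply Finset.sum_le_sum
    intro k _
    by_cases hk : τ ≤ k
    · calc ((k : ℝ) + 2) ^ 2 / 4 * v k
          ≤ ((k : ℝ) + 2) ^ 2 / 4 *
              (C / 2 * ∑ i ∈ Finset.Icc 1 (min τ (k - τ)), ((i : ℝ) + 1) * u (k - i)) :=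
            mul_le_mul_of_nonneg_left (hvb k hk) (by positivity)
        _ = ∑ i ∈ Finset.Icc 1 (min τ (k - τ)),
              (C * ((i : ℝ) + 1) * u (k - i)) * (((k : ℝ) + 2) ^ 2 / 8) := by
            rw [Finset.mul_sum, Finset.mul_sum]
            apply Finset.sum_congr rfl
            intro i _; ring
        _ ≤ ∑ i ∈ Finset.Icc 1 (min τ (k - τ)),
              (C * ((i : ℝ) + 1) * u (k - i)) * ((((k - i : ℕ) : ℝ) + 2) ^ 2 / 2) := by
            apply Finset.sum_le_sum
            intro i hi
            simp only [Finset.mem_Icc, le_min_iff] at hi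
            have hik : 2 * i ≤ k := by omega
            have hik' : i ≤ k := by omega
            apply mul_le_mul_of_nonneg_left _
              (mul_nonneg (mul_nonneg hC0 (by positivity)) (hu (k - i)))
            have hcast : ((k - i : ℕ) : ℝ) = (k : ℝ) - i := by
              push_cast [Nat.cast_sub hik']; ring
            rw [hcast]
            have h2i : 2 * (i : ℝ) ≤ k := by exact_mod_cast hik
            nlinarith [sq_nonneg ((k : ℝ) - 2 * i), Nat.cast_nonneg (α := ℝ) i,
              Nat.cast_nonneg (α := ℝ) k]
        _ = 2 * C * ∑ i ∈ Finset.Icc 1 (min τ (k - τ)), ((i : ℝ) + 1) * g (k - i) := by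
            rw [Finset.mul_sum]
            apply Finset.sum_congr rfl
            intro i _
            simp only [hg]
            ring
    · rw [hv0 k (by omega)]
      have : (0 : ℝ) ≤ ∑ i ∈ Finset.Icc 1 (min τ (k - τ)), ((i : ℝ) + 1) * g (k - i) :=
        Finset.sum_nonneg fun i _ => mul_nonneg (by positivity) (hg0 _)
      nlinarith
  -- Step 2 : swap sums
  have hfilter : ∀ k : ℕ, Finset.Icc 1 (min τ (k - τ))
      = (Finset.Icc 1 τ).filter (fun i => i ≤ k - τ) := by
    intro k
    ext i
    simp only [Finset.mem_Icc, Finset.mem_filter, le_min_iff]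
    omega
  have step2 : ∑ k ∈ Finset.range (K + 1),
        ∑ i ∈ Finset.Icc 1 (min τ (k - τ)), ((i : ℝ) + 1) * g (k - i)
      = ∑ i ∈ Finset.Icc 1 τ, ∑ k ∈ Finset.range (K + 1),
          (if i ≤ k - τ then ((i : ℝ) + 1) * g (k - i) else 0) := by
    rw [Finset.sum_comm]
    apply Finset.sum_congr rfl
    intro k _
    rw [hfilter k, Finset.sum_filter]
  -- Step 3 : per i bound
  have step3 : ∀ i ∈ Finset.Icc 1 τ,
      (∑ k ∈ Finset.range (K + 1), (if i ≤ k - τ then ((i : ℝ) + 1) * g (k - i) else 0))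
        ≤ ((i : ℝ) + 1) * G := by
    intro i hi
    simp only [Finset.mem_Icc] at hi
    have h1 : (∑ k ∈ Finset.range (K + 1), (if i ≤ k - τ then ((i : ℝ) + 1) * g (k - i) else 0))
        = ∑ k ∈ Finset.Icc (τ + i) K, ((i : ℝ) + 1) * g (k - i) := by
      rw [← Finset.sum_filter]
      apply Finset.sum_congr _ (fun _ _ => rfl)
      ext k
      simp only [Finset.mem_filter, Finset.mem_range, Finset.mem_Icc]
      omega
    rw [h1]
    have h2 : Finset.Icc (τ + i) K = (Finset.Icc τ (K - i)).image (· + i) := by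
      ext k
      simp only [Finset.mem_Icc, Finset.mem_image]
      constructor
      · intro h; exact ⟨k - i, by omega, by omega⟩
      · rintro ⟨a, ha, rfl⟩; omega
    rw [h2, Finset.sum_image (fun a _ b _ h => by omega)]
    have h3 : ∀ a ∈ Finset.Icc τ (K - i), ((i : ℝ) + 1) * g (a + i - i) = ((i : ℝ) + 1) * g a := by
      intro a _; congr 2; omega
    rw [Finset.sum_congr rfl h3, ← Finset.mul_sum]
    apply mul_le_mul_of_nonneg_left _ (by positivity)
    rw [hGg]
    apply Finset.sum_le_sum_of_subset_of_nonneg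
    · intro a ha
      simp only [Finset.mem_Icc] at ha
      simp only [Finset.mem_range]
      omega
    · intro j _ _; exact hg0 j
  -- combine
  have step4 : ∑ i ∈ Finset.Icc 1 τ, ∑ k ∈ Finset.range (K + 1),
        (if i ≤ k - τ then ((i : ℝ) + 1) * g (k - i) else 0)
      ≤ C / 2 * G := by
    calc _ ≤ ∑ i ∈ Finset.Icc 1 τ, ((i : ℝ) + 1) * G := Finset.sum_le_sum step3
      _ = (∑ i ∈ Finset.Icc 1 τ, ((i : ℝ) + 1)) * G := by rw [Finset.sum_mul]
      _ = C / 2 * G := by rw [sum_coeff_delayed]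
  calc ∑ k ∈ Finset.range (K + 1), ((k : ℝ) + 2) ^ 2 / 4 * v k
      ≤ 2 * C * ∑ k ∈ Finset.range (K + 1),
          ∑ i ∈ Finset.Icc 1 (min τ (k - τ)), ((i : ℝ) + 1) * g (k - i) := step1
    _ ≤ 2 * C * (C / 2 * G) := by
        rw [step2]
        exact mul_le_mul_of_nonneg_left step4 (by positivity)
    _ = C ^ 2 * G := by ring
end

section
/- For every k ≥ 0, the iterate x^k is the corresponding combination of z^0, …, z^k: x^k = Σ_{i=0}^{k} e_{k,i} z^i, and the coefficients sum to one: Σ_{i=0}^{k} e_{k,i} = 1. -/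
/-!
Unfolding one step of the recursion, `(1 − θ^k)x^k + nθ^k z^{k+1} − (n − 1)θ^k z^k` is again a
combination of `z^0, …, z^{k+1}`: the old coefficients are scaled by `1 − θ^k`, the coefficient
of `z^k` loses `(n − 1)θ^k`, and `z^{k+1}` enters with `nθ^k`. Since `e_{k,k} = nθ^{k−1}` for
`k ≥ 1` and `e_{0,0} = 1`, this is exactly the recursion defining `e_{k+1,·}`, and the
coefficient sum changes by `−θ^k + nθ^k − (n − 1)θ^k = 0`.
-/

open Finset

section AffineStep

variable {R M : Type*} [Ring R] [AddCommGroup M] [Module R M]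

theorem sum_range_smul_of_affine_step {c d : ℕ → R} {s a b : R} {k : ℕ} (z : ℕ → M)
    (hlow : ∀ i < k, d i = s * c i) (hlast : d k = s * c k - b) (hnew : d (k + 1) = a) :
    ∑ i ∈ range (k + 2), d i • z i
      = s • ∑ i ∈ range (k + 1), c i • z i + a • z (k + 1) - b • z k := by
  have hscale : ∑ i ∈ range k, d i • z i = s • ∑ i ∈ range k, c i • z i := by
    rw [smul_sum]
    exact sum_congr rfl fun i hi => by rw [hlow i (mem_range.mp hi), mul_smul]
  rw [sum_range_succ, sum_range_succ, sum_range_succ, hscale, hlast, hnew, sub_smul, mul_smul,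
    smul_add]
  abel

theorem sum_range_of_affine_step {c d : ℕ → R} {s a b : R} {k : ℕ}
    (hlow : ∀ i < k, d i = s * c i) (hlast : d k = s * c k - b) (hnew : d (k + 1) = a) :
    ∑ i ∈ range (k + 2), d i = s * ∑ i ∈ range (k + 1), c i + a - b := by
  simpa using sum_range_smul_of_affine_step (fun _ => (1 : R)) hlow hlast hnew

end AffineStep

theorem aascd_convex_combination_general
    {V : Type*} [AddCommGroup V] [Module ℝ V]
    (n : ℝ)
    (θ : ℕ → ℝ) (z : ℕ → V)
    (x : ℕ → V) (hx0 : x 0 = z 0)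
    (hx : ∀ k, x (k + 1)
        = (1 - θ k) • x k + (n * θ k) • z (k + 1) - ((n - 1) * θ k) • z k)
    (e : ℕ → ℕ → ℝ)
    (he00 : e 0 0 = 1)
    (he10 : e 1 0 = 1 - n * θ 0) (he11 : e 1 1 = n * θ 0)
    (herec1 : ∀ k, 1 ≤ k → ∀ i, i ≤ k - 1 → e (k + 1) i = (1 - θ k) * e k i)
    (herec2 : ∀ k, 1 ≤ k →
        e (k + 1) k = n * (1 - θ k) * θ (k - 1) + θ k - n * θ k)
    (herec3 : ∀ k, 1 ≤ k → e (k + 1) (k + 1) = n * θ k) :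
    ∀ k, x k = ∑ i ∈ Finset.range (k + 1), e k i • z i
      ∧ ∑ i ∈ Finset.range (k + 1), e k i = 1 := by
  have hdiag : ∀ k, e (k + 1) (k + 1) = n * θ k
    | 0 => he11
    | k + 1 => herec3 (k + 1) k.succ_pos
  have hlast : ∀ k, e (k + 1) k = (1 - θ k) * e k k - (n - 1) * θ k
    | 0 => by rw [he10, he00]; ring
    | k + 1 => by rw [herec2 (k + 1) k.succ_pos, Nat.add_sub_cancel, hdiag k]; ring
  have hlow : ∀ k, ∀ i < k, e (k + 1) i = (1 - θ k) * e k i := fun k i hi =>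
    herec1 k (by omega) i (by omega)
  intro k
  induction k with
  | zero => simp [hx0, he00]
  | succ k ih =>
    refine ⟨?_, ?_⟩
    · rw [hx k, ih.1, sum_range_smul_of_affine_step z (hlow k) (hlast k) (hdiag k)]
    · rw [sum_range_of_affine_step (hlow k) (hlast k) (hdiag k), ih.2]
      ring

/-- The AASCD iterates `x^{k+1} = (1−θ^k)x^k + nθ^k z^{k+1} − (n−1)θ^k z^k` are the
convex-type combinations `x^k = Σ_{i=0}^{k} e_{k,i} z^i` of `z^0, …, z^k` with the
recursively defined coefficients `e_{k,i}`, and `Σ_{i=0}^{k} e_{k,i} = 1`. -/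
theorem aascd_convex_combination
    {V : Type*} [AddCommGroup V] [Module ℝ V]
    (n : ℝ) (hn : 1 ≤ n)
    (θ : ℕ → ℝ) (z : ℕ → V)
    (x : ℕ → V) (hx0 : x 0 = z 0)
    (hx : ∀ k, x (k + 1)
        = (1 - θ k) • x k + (n * θ k) • z (k + 1) - ((n - 1) * θ k) • z k)
    (e : ℕ → ℕ → ℝ)
    (he00 : e 0 0 = 1)
    (he10 : e 1 0 = 1 - n * θ 0) (he11 : e 1 1 = n * θ 0)
    (herec1 : ∀ k, 1 ≤ k → ∀ i, i ≤ k - 1 → e (k + 1) i = (1 - θ k) * e k i)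
    (herec2 : ∀ k, 1 ≤ k →
        e (k + 1) k = n * (1 - θ k) * θ (k - 1) + θ k - n * θ k)
    (herec3 : ∀ k, 1 ≤ k → e (k + 1) (k + 1) = n * θ k) :
    ∀ k, x k = ∑ i ∈ Finset.range (k + 1), e k i • z i
      ∧ ∑ i ∈ Finset.range (k + 1), e k i = 1 :=
  aascd_convex_combination_general n θ z x hx0 hx e he00 he10 he11 herec1 herec2 herec3
end

section
/- For all u, x̃ ∈ H: (1/n) Σ_{k=1}^{n} ‖∇f_k(u) − ∇f_k(x̃) + ∇f(x̃) − ∇f(u)‖² ≤ 2L · ( f(x̃) − f(u) + ⟨∇f(u), u − x̃⟩ ). In other words, the expected squared deviation of the variance-reduced gradient estimator ∇̃f(u) = ∇f_k(u) − ∇f_k(x̃) + ∇f(x̃) (with k uniform on {1,…,n}) from ∇f(u) is at most 2L times the Bregman divergence of f between x̃ and u. -/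
/-!
Writing `a_k = ∇f_k(u) − ∇f_k(x̃)`, the left-hand side is the variance `(1/n) Σ ‖a_k − ā‖²`,
which is at most the second moment `(1/n) Σ ‖a_k‖²`. Each `‖a_k‖²` is bounded by
`2L` times the Bregman divergence of `f_k` by co-coercivity of the gradient of a convex
`L`-smooth function, and averaging the Bregman divergences gives that of `f`. Co-coercivity
follows from the descent lemma: `z ↦ f_k z − ⟪∇f_k(u), z⟫` is convex, minimal at `u`, and a
gradient step of length `1/L` from `x̃` decreases it by at least `‖a_k‖² / (2L)`.
-/

open scoped RealInnerProductSpace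

open AffineMap Finset

section Gradient

variable {H : Type*} [NormedAddCommGroup H] [InnerProductSpace ℝ H] {g : H → ℝ} {g' : H → H}

theorem HasFDerivAt.hasDerivAt_comp_lineMap {v x y : H} {t : ℝ}
    (hg : HasFDerivAt g (innerSL ℝ v : H →L[ℝ] ℝ) (lineMap x y t)) :
    HasDerivAt (fun s : ℝ => g (lineMap x y s)) ⟪v, y - x⟫ t := by
  have := hg.comp_hasDerivAt t hasDerivAt_lineMap
  rwa [innerSL_apply_apply] at this

theorem ConvexOn.add_inner_sub_le (hconv : ConvexOn ℝ Set.univ g)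
    {x : H} (hg : HasFDerivAt g (innerSL ℝ (g' x) : H →L[ℝ] ℝ) x) (y : H) :
    g x + ⟪g' x, y - x⟫ ≤ g y := by
  have hline : ConvexOn ℝ Set.univ fun t : ℝ => g (lineMap x y t) :=
    hconv.comp_affineMap (lineMap x y)
  have := hline.le_slope_of_hasDerivAt (Set.mem_univ 0) (Set.mem_univ 1) zero_lt_one
    (HasFDerivAt.hasDerivAt_comp_lineMap (by simpa using hg))
  simp only [slope_def_field, lineMap_apply_zero, lineMap_apply_one] at this
  linarith

theorem le_add_inner_add_sq_of_lipschitz_gradient {L : ℝ}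
    (hg : ∀ x, HasFDerivAt g (innerSL ℝ (g' x) : H →L[ℝ] ℝ) x)
    (hlip : ∀ u v, ‖g' u - g' v‖ ≤ L * ‖u - v‖) (x y : H) :
    g y ≤ g x + ⟪g' x, y - x⟫ + L / 2 * ‖y - x‖ ^ 2 := by
  -- mean value theorem for `t ↦ g (x + t (y - x)) - L t² ‖y - x‖² / 2` on `[0, 1]`
  set φ : ℝ → ℝ := fun t => g (lineMap x y t) - L / 2 * ‖y - x‖ ^ 2 * t ^ 2
  have hφ : ∀ t, HasDerivAt φ (⟪g' (lineMap x y t), y - x⟫ - L * ‖y - x‖ ^ 2 * t) t := by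
    intro t
    have hsq : HasDerivAt (fun s : ℝ => L / 2 * ‖y - x‖ ^ 2 * s ^ 2) (L * ‖y - x‖ ^ 2 * t) t :=
      ((hasDerivAt_pow 2 t).const_mul _).congr_deriv (by push_cast; ring)
    exact (hg _).hasDerivAt_comp_lineMap.sub hsq
  obtain ⟨c, ⟨hc0, -⟩, hc⟩ := exists_hasDerivAt_eq_slope φ _ zero_lt_one
    (fun t _ => (hφ t).continuousAt.continuousWithinAt) (fun t _ => hφ t)
  have hgrad : ⟪g' (lineMap x y c) - g' x, y - x⟫ ≤ L * ‖y - x‖ ^ 2 * c := calc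
    _ ≤ ‖g' (lineMap x y c) - g' x‖ * ‖y - x‖ := real_inner_le_norm _ _
    _ ≤ L * ‖lineMap x y c - x‖ * ‖y - x‖ := by gcongr; exact hlip _ _
    _ = L * ‖y - x‖ ^ 2 * c := by
      rw [lineMap_apply_module', add_sub_cancel_right, norm_smul, Real.norm_of_nonneg hc0.le]
      ring
  simp only [φ, lineMap_apply_zero, lineMap_apply_one, inner_sub_left] at hc hgrad
  linarith

theorem norm_sq_le_of_lipschitz_gradient_of_forall_le {L : ℝ} (hL : 0 < L)
    (hg : ∀ x, HasFDerivAt g (innerSL ℝ (g' x) : H →L[ℝ] ℝ) x)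
    (hlip : ∀ u v, ‖g' u - g' v‖ ≤ L * ‖u - v‖) {q : H} (hq : ∀ z, g q ≤ g z) (p : H) :
    ‖g' p‖ ^ 2 ≤ 2 * L * (g p - g q) := by
  have hstep := le_add_inner_add_sq_of_lipschitz_gradient hg hlip p (p - L⁻¹ • g' p)
  rw [sub_sub_cancel_left, inner_neg_right, real_inner_smul_right, real_inner_self_eq_norm_sq,
    norm_neg, norm_smul, Real.norm_of_nonneg (inv_nonneg.2 hL.le)] at hstep
  have := (hq _).trans hstep
  field_simp at this
  nlinarith

theorem ConvexOn.norm_sub_gradient_sq_le {L : ℝ} (hconv : ConvexOn ℝ Set.univ g)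
    (hg : ∀ x, HasFDerivAt g (innerSL ℝ (g' x) : H →L[ℝ] ℝ) x)
    (hlip : ∀ u v, ‖g' u - g' v‖ ≤ L * ‖u - v‖) (p q : H) :
    ‖g' p - g' q‖ ^ 2 ≤ 2 * L * (g p - g q - ⟪g' q, p - q⟫) := by
  rcases eq_or_ne p q with rfl | hpq
  · simp
  have hL : 0 ≤ L := nonneg_of_mul_nonneg_left ((norm_nonneg _).trans (hlip p q))
    (norm_pos_iff.2 (sub_ne_zero.2 hpq))
  rcases hL.eq_or_lt with rfl | hL
  · simp [sub_eq_zero.1 (norm_le_zero_iff.1 (by simpa using hlip p q))]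
  -- `z ↦ g z - ⟪g' q, z⟫` is convex with `L`-Lipschitz gradient `g' · - g' q`, minimal at `q`
  have hshift : ∀ x, HasFDerivAt (fun z => g z - ⟪g' q, z⟫)
      (innerSL ℝ (g' x - g' q) : H →L[ℝ] ℝ) x := fun x => by
    rw [map_sub]
    exact (hg x).sub (innerSL ℝ (g' q)).hasFDerivAt
  have hshift_conv : ConvexOn ℝ Set.univ fun z => g z - ⟪g' q, z⟫ :=
    hconv.sub ((innerSL ℝ (g' q)).toLinearMap.concaveOn convex_univ)
  have hmin : ∀ z, g q - ⟪g' q, q⟫ ≤ g z - ⟪g' q, z⟫ := fun z => by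
    simpa using hshift_conv.add_inner_sub_le (g' := fun x => g' x - g' q) (hshift q) z
  have := norm_sq_le_of_lipschitz_gradient_of_forall_le hL hshift
    (fun u v => by simpa only [sub_sub_sub_cancel_right] using hlip u v) hmin p
  rw [inner_sub_right]
  linarith

end Gradient

theorem sum_norm_sub_average_sq {ι E : Type*} [NormedAddCommGroup E] [InnerProductSpace ℝ E]
    (s : Finset ι) (a : ι → E) :
    ∑ i ∈ s, ‖a i - (1 / #s : ℝ) • ∑ j ∈ s, a j‖ ^ 2
      = ∑ i ∈ s, ‖a i‖ ^ 2 - (1 / #s : ℝ) * ‖∑ j ∈ s, a j‖ ^ 2 := by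
  simp only [norm_sub_sq_real, sum_add_distrib, sum_sub_distrib, ← mul_sum, ← sum_inner,
    sum_const, nsmul_eq_mul, real_inner_smul_right, real_inner_self_eq_norm_sq, norm_smul,
    mul_pow, Real.norm_eq_abs, sq_abs]
  rcases eq_or_ne (#s : ℝ) 0 with h | h
  · simp [h]
  · field_simp
    ring

theorem variance_reduced_gradient_bound_general
    {H : Type*} [NormedAddCommGroup H] [InnerProductSpace ℝ H]
    (n : ℕ)
    (fi : Fin n → H → ℝ) (fi' : Fin n → H → H) (L : ℝ)
    (hconv : ∀ i, ConvexOn ℝ Set.univ (fi i))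
    (hgrad : ∀ i u, HasFDerivAt (fi i) ((innerSL ℝ (fi' i u)) : H →L[ℝ] ℝ) u)
    (hlip : ∀ i u v, ‖fi' i u - fi' i v‖ ≤ L * ‖u - v‖) :
    ∀ u xt : H,
      (1 / (n : ℝ)) * ∑ k, ‖fi' k u - fi' k xt
            + (1 / (n : ℝ)) • ∑ i, fi' i xt - (1 / (n : ℝ)) • ∑ i, fi' i u‖ ^ 2
        ≤ 2 * L * ((1 / (n : ℝ)) * ∑ i, fi i xt - (1 / (n : ℝ)) * ∑ i, fi i u
            + ⟪(1 / (n : ℝ)) • ∑ i, fi' i u, u - xt⟫) := by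
  intro u xt
  set a : Fin n → H := fun k => fi' k u - fi' k xt
  have hsummand : ∀ k, fi' k u - fi' k xt + (1 / (n : ℝ)) • ∑ i, fi' i xt
      - (1 / (n : ℝ)) • ∑ i, fi' i u = a k - (1 / (n : ℝ)) • ∑ i, a i := fun k => by
    simp only [a, sum_sub_distrib, smul_sub]
    abel
  have hvariance : ∑ k, ‖a k - (1 / (n : ℝ)) • ∑ i, a i‖ ^ 2 ≤ ∑ k, ‖a k‖ ^ 2 := by
    have := sum_norm_sub_average_sq univ a
    rw [card_univ, Fintype.card_fin] at this
    rw [this]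
    exact sub_le_self _ (by positivity)
  have hcocoercive : ∀ k, ‖a k‖ ^ 2 ≤ 2 * L * (fi k xt - fi k u - ⟪fi' k u, xt - u⟫) :=
    fun k => by
      rw [norm_sub_rev]
      exact (hconv k).norm_sub_gradient_sq_le (hgrad k) (hlip k) xt u
  calc _ = (1 / (n : ℝ)) * ∑ k, ‖a k - (1 / (n : ℝ)) • ∑ i, a i‖ ^ 2 := by simp only [hsummand]
    _ ≤ (1 / (n : ℝ)) * ∑ k, 2 * L * (fi k xt - fi k u - ⟪fi' k u, xt - u⟫) :=
      mul_le_mul_of_nonneg_left (hvariance.trans (sum_le_sum fun k _ => hcocoercive k))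
        (by positivity)
    _ = _ := by
      rw [real_inner_smul_left, sum_inner, ← neg_sub xt u]
      simp only [inner_neg_right, sum_neg_distrib, ← mul_sum, sum_sub_distrib]
      ring

/-- Variance bound for the SVRG gradient estimator: for all `u, x̃`,
`(1/n) Σ_k ‖∇f_k(u) − ∇f_k(x̃) + ∇f(x̃) − ∇f(u)‖²
  ≤ 2L ( f(x̃) − f(u) + ⟨∇f(u), u − x̃⟩ )`,
where `f = (1/n) Σ f_i` and `∇f = (1/n) Σ ∇f_i`. -/
theorem variance_reduced_gradient_bound
    {H : Type*} [NormedAddCommGroup H] [InnerProductSpace ℝ H]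
    (n : ℕ) (hn : 1 ≤ n)
    (fi : Fin n → H → ℝ) (fi' : Fin n → H → H) (L : ℝ)
    (hconv : ∀ i, ConvexOn ℝ Set.univ (fi i))
    (hgrad : ∀ i u, HasFDerivAt (fi i) ((innerSL ℝ (fi' i u)) : H →L[ℝ] ℝ) u)
    (hlip : ∀ i u v, ‖fi' i u - fi' i v‖ ≤ L * ‖u - v‖) :
    ∀ u xt : H,
      (1 / (n : ℝ)) * ∑ k, ‖fi' k u - fi' k xt
            + (1 / (n : ℝ)) • ∑ i, fi' i xt - (1 / (n : ℝ)) • ∑ i, fi' i u‖ ^ 2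
        ≤ 2 * L * ((1 / (n : ℝ)) * ∑ i, fi i xt - (1 / (n : ℝ)) * ∑ i, fi i u
            + ⟪(1 / (n : ℝ)) • ∑ i, fi' i u, u - xt⟫) :=
  variance_reduced_gradient_bound_general n fi fi' L hconv hgrad hlip
end

section
/- For all integers 0 ≤ j ≤ k: y^k = y^j + Σ_{i=j+1}^{k} (1 + c^i)(x^i − y^{i−1}) + Σ_{i=j+1}^{k−1} c^i ( Σ_{l=i+1}^{k} b(i+1, l) ) (x^i − y^{i−1}) + ( Σ_{i=j+1}^{k} b(j+1, i) ) (y^j − x^j). -/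
/-- Unrolling of the ASCD recursion: for `j ≤ k`,
`y^k − x^k = Σ_{i=j+1}^{k} c^i b(i+1,k) (x^i − y^{i−1}) + b(j+1,k)(y^j − x^j)`. -/
lemma ascd_aux {H : Type*} [AddCommGroup H] [Module ℝ H]
    (x y : ℕ → H) (a c : ℕ → ℝ)
    (hrec : ∀ k, 1 ≤ k →
      y k = x k + c k • (x k - y (k - 1)) + a k • (y (k - 1) - x (k - 1)))
    (b : ℕ → ℕ → ℝ) (hb : ∀ l k, b l k = ∏ i ∈ Finset.Icc l k, a i) :
    ∀ j k : ℕ, j ≤ k → y k - x k =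
      (∑ i ∈ Finset.Icc (j + 1) k, (c i * b (i + 1) k) • (x i - y (i - 1)))
        + b (j + 1) k • (y j - x j) := by
  intro j
  refine Nat.le_induction ?_ ?_
  · simp [hb, Finset.Icc_eq_empty (by omega : ¬ j + 1 ≤ j)]
  · intro k hk ih
    have hrec' := hrec (k + 1) (by omega)
    simp only [Nat.add_sub_cancel] at hrec'
    rw [Finset.sum_Icc_succ_top (by omega : j + 1 ≤ k + 1)]
    simp only [Nat.add_sub_cancel]
    have hbtop : b (k + 1 + 1) (k + 1) = 1 := by
      rw [hb, Finset.Icc_eq_empty (by omega)]; simp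
    have hbj : b (j + 1) (k + 1) = b (j + 1) k * a (k + 1) := by
      rw [hb, hb, Finset.prod_Icc_succ_top (by omega)]
    have hsum : ∀ i ∈ Finset.Icc (j + 1) k,
        (c i * b (i + 1) (k + 1)) • (x i - y (i - 1))
          = a (k + 1) • ((c i * b (i + 1) k) • (x i - y (i - 1))) := by
      intro i hi
      have hik := (Finset.mem_Icc.mp hi).2
      have hbe : b (i + 1) (k + 1) = b (i + 1) k * a (k + 1) := by
        rw [hb, hb, Finset.prod_Icc_succ_top (by omega)]
      rw [hbe]; module
    rw [Finset.sum_congr rfl hsum, ← Finset.smul_sum, hbtop, hbj, hrec', ih]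
    module

/-- Telescoping identity for the ASCD extrapolation recursion
`y^k = x^k + c^k(x^k − y^{k−1}) + a^k(y^{k−1} − x^{k−1})` (k ≥ 1): for all `0 ≤ j ≤ k`,
`y^k = y^j + Σ_{i=j+1}^{k} (1+c^i)(x^i − y^{i−1})
     + Σ_{i=j+1}^{k−1} c^i (Σ_{l=i+1}^{k} b(i+1,l)) (x^i − y^{i−1})
     + (Σ_{i=j+1}^{k} b(j+1,i))(y^j − x^j)`. -/
theorem ascd_momentum_telescoping
    {H : Type*} [AddCommGroup H] [Module ℝ H]
    (x y : ℕ → H) (a c : ℕ → ℝ)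
    (hrec : ∀ k, 1 ≤ k →
      y k = x k + c k • (x k - y (k - 1)) + a k • (y (k - 1) - x (k - 1)))
    (b : ℕ → ℕ → ℝ) (hb : ∀ l k, b l k = ∏ i ∈ Finset.Icc l k, a i) :
    ∀ j k : ℕ, j ≤ k →
      y k = y j + ∑ i ∈ Finset.Icc (j + 1) k, (1 + c i) • (x i - y (i - 1))
        + ∑ i ∈ Finset.Icc (j + 1) (k - 1),
            (c i * ∑ l ∈ Finset.Icc (i + 1) k, b (i + 1) l) • (x i - y (i - 1))
        + (∑ i ∈ Finset.Icc (j + 1) k, b (j + 1) i) • (y j - x j) := by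
  intro j
  refine Nat.le_induction ?_ ?_
  · simp [Finset.Icc_eq_empty (by omega : ¬ j + 1 ≤ j),
      Finset.Icc_eq_empty (by omega : ¬ j + 1 ≤ j - 1)]
  · intro k hk ih
    have hrec' := hrec (k + 1) (by omega)
    simp only [Nat.add_sub_cancel] at hrec'
    have hyk := ascd_aux x y a c hrec b hb j k hk
    simp only [Nat.add_sub_cancel]
    -- rewrite the ih's middle sum to be over Icc (j+1) k
    have hsub : (∑ i ∈ Finset.Icc (j + 1) (k - 1),
          (c i * ∑ l ∈ Finset.Icc (i + 1) k, b (i + 1) l) • (x i - y (i - 1)))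
        = ∑ i ∈ Finset.Icc (j + 1) k,
          (c i * ∑ l ∈ Finset.Icc (i + 1) k, b (i + 1) l) • (x i - y (i - 1)) := by
      apply Finset.sum_subset (Finset.Icc_subset_Icc_right (by omega))
      intro i hi hni
      simp only [Finset.mem_Icc] at hi hni
      have : i = k := by omega
      subst this
      rw [Finset.Icc_eq_empty (by omega : ¬ i + 1 ≤ i)]
      simp
    rw [hsub] at ih
    -- split the two Icc (j+1) (k+1) sums
    rw [Finset.sum_Icc_succ_top (by omega : j + 1 ≤ k + 1),
      Finset.sum_Icc_succ_top (by omega : j + 1 ≤ k + 1)]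
    simp only [Nat.add_sub_cancel]
    have hbj : b (j + 1) (k + 1) = b (j + 1) k * a (k + 1) := by
      rw [hb, hb, Finset.prod_Icc_succ_top (by omega)]
    -- expand the middle sum with top index k+1 in the inner sums
    have hmid : (∑ i ∈ Finset.Icc (j + 1) k,
          (c i * ∑ l ∈ Finset.Icc (i + 1) (k + 1), b (i + 1) l) • (x i - y (i - 1)))
        = (∑ i ∈ Finset.Icc (j + 1) k,
            (c i * ∑ l ∈ Finset.Icc (i + 1) k, b (i + 1) l) • (x i - y (i - 1)))
          + a (k + 1) • ∑ i ∈ Finset.Icc (j + 1) k,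
              (c i * b (i + 1) k) • (x i - y (i - 1)) := by
      rw [Finset.smul_sum, ← Finset.sum_add_distrib]
      apply Finset.sum_congr rfl
      intro i hi
      have hik := (Finset.mem_Icc.mp hi).2
      rw [Finset.sum_Icc_succ_top (by omega : i + 1 ≤ k + 1),
        show b (i + 1) (k + 1) = b (i + 1) k * a (k + 1) from by
          rw [hb, hb, Finset.prod_Icc_succ_top (by omega)]]
      module
    rw [hmid, hbj, hrec', hyk, ih]
    module
end

section
/- For all integers 1 ≤ j ≤ k: y^k − [ x^j + ( a(1 − a^{k−j+1})/(1 − a) ) (x^j − x^{j−1}) ] = Σ_{i=j+1}^{k} ( 1 + Σ_{l=i}^{k} a^{l−i+1} ) (x^i − y^{i−1}). -/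
/-- Telescoping auxiliary lemma. -/
lemma cm_telescope {H : Type*} [AddCommGroup H] [Module ℝ H]
    (a : ℝ) (x y : ℕ → H)
    (hrec : ∀ k, 1 ≤ k → y k = x k + a • (x k - x (k - 1))) :
    ∀ j k : ℕ, 1 ≤ j → j ≤ k →
      ∑ i ∈ Finset.Icc (j + 1) k, a ^ (k - i + 2) • (x i - y (i - 1))
        = a ^ 2 • (x k - x (k - 1)) - a ^ (k - j + 2) • (x j - x (j - 1)) := by
  intro j k hj hjk
  induction k, hjk using Nat.le_induction with
  | base => simp
  | succ k hk ih =>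
    rw [Finset.sum_Icc_succ_top (by omega : j + 1 ≤ k + 1)]
    have hstep : ∀ i ∈ Finset.Icc (j + 1) k,
        a ^ (k + 1 - i + 2) • (x i - y (i - 1))
          = a • (a ^ (k - i + 2) • (x i - y (i - 1))) := by
      intro i hi
      simp only [Finset.mem_Icc] at hi
      rw [smul_smul]
      congr 1
      rw [← pow_succ']
      congr 1
      omega
    rw [Finset.sum_congr rfl hstep, ← Finset.smul_sum, ih]
    have hyk : y k = x k + a • (x k - x (k - 1)) := hrec k (by omega)
    have hxk1 : (k + 1) - 1 = k := by omega
    have he1 : a ^ (k + 1 - (k + 1) + 2) = a ^ 2 := by norm_num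
    have he2 : a ^ (k + 1 - j + 2) = a * a ^ (k - j + 2) := by
      rw [← pow_succ']; congr 1; omega
    rw [hxk1, he1, he2, hyk]
    module

/-- Constant-momentum compensation identity: if `y^k = x^k + a(x^k − x^{k−1})` for `k ≥ 1`
and `a ≠ 1`, then for all `1 ≤ j ≤ k`,
`y^k − [x^j + (a(1 − a^{k−j+1})/(1−a))(x^j − x^{j−1})]
  = Σ_{i=j+1}^{k} (1 + Σ_{l=i}^{k} a^{l−i+1}) (x^i − y^{i−1})`. -/
theorem constant_momentum_compensation
    {H : Type*} [AddCommGroup H] [Module ℝ H]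
    (a : ℝ) (ha : a ≠ 1)
    (x y : ℕ → H)
    (hrec : ∀ k, 1 ≤ k → y k = x k + a • (x k - x (k - 1))) :
    ∀ j k : ℕ, 1 ≤ j → j ≤ k →
      y k - (x j + (a * (1 - a ^ (k - j + 1)) / (1 - a)) • (x j - x (j - 1)))
        = ∑ i ∈ Finset.Icc (j + 1) k,
            (1 + ∑ l ∈ Finset.Icc i k, a ^ (l - i + 1)) • (x i - y (i - 1)) := by
  intro j k hj hjk
  have ha' : (1 : ℝ) - a ≠ 0 := sub_ne_zero.mpr (Ne.symm ha)
  induction k, hjk using Nat.le_induction with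
  | base =>
    simp only [Finset.Icc_self, Nat.sub_self, zero_add, pow_one]
    rw [Finset.Icc_eq_empty (by omega : ¬ j + 1 ≤ j), Finset.sum_empty]
    have hyj : y j = x j + a • (x j - x (j - 1)) := hrec j hj
    have hc : a * (1 - a) / (1 - a) = a := by field_simp
    rw [hyj, hc]
    abel
  | succ k hk ih =>
    -- split top term of outer sum
    rw [Finset.sum_Icc_succ_top (by omega : j + 1 ≤ k + 1)]
    -- coefficient of top term
    have htop : (1 + ∑ l ∈ Finset.Icc (k + 1) (k + 1), a ^ (l - (k + 1) + 1))
        = 1 + a := by simp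
    -- split inner sums
    have hinner : ∀ i ∈ Finset.Icc (j + 1) k,
        (1 + ∑ l ∈ Finset.Icc i (k + 1), a ^ (l - i + 1)) • (x i - y (i - 1))
          = (1 + ∑ l ∈ Finset.Icc i k, a ^ (l - i + 1)) • (x i - y (i - 1))
            + a ^ (k - i + 2) • (x i - y (i - 1)) := by
      intro i hi
      simp only [Finset.mem_Icc] at hi
      rw [Finset.sum_Icc_succ_top (by omega : i ≤ k + 1)]
      have : k + 1 - i + 1 = k - i + 2 := by omega
      rw [this, ← add_assoc, add_smul]
    rw [Finset.sum_congr rfl hinner, Finset.sum_add_distrib, ← ih,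
      cm_telescope a x y hrec j k hj hk, htop]
    have hyk : y k = x k + a • (x k - x (k - 1)) := hrec k (by omega)
    have hyk1 : y (k + 1) = x (k + 1) + a • (x (k + 1) - x k) := by
      have := hrec (k + 1) (by omega)
      simpa using this
    have hC : a * (1 - a ^ (k + 1 - j + 1)) / (1 - a)
        = a * (1 - a ^ (k - j + 1)) / (1 - a) + a ^ (k - j + 2) := by
      have h1 : k + 1 - j + 1 = (k - j + 1) + 1 := by omega
      have h2 : k - j + 2 = (k - j + 1) + 1 := by omega
      rw [h1, h2]
      field_simp
      ring
    simp only [Nat.add_sub_cancel]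
    rw [hyk1, hyk, hC]
    module
end

section
/- For every k ≥ 0 the two iterate systems coincide: z^k = u^k, x^k = u^k + d^k v^k, w^{j(k)} = ŵ^{j(k)}, and δ^k = δ̂^k; in particular AAGD and its implementation form generate identical sequences of iterates x^k. -/
open scoped RealInnerProductSpace
open Finset

/-!
The implementation maintains `z^k = u^k` and `x^k = u^k + d^k v^k`: a step `δ` moves `u` by `δ`
and `v` by `-δ / d^k`, which changes `u + d v` exactly as the AAGD averaging changes `x`, and
leaves the last increment `x^{m+1} - x^m = -θ^m d^m v^{m+1}`. Since
`a^i = θ^i d^i / (θ^{i-1} d^{i-1})`, the products telescope to `b(m+1, i) = θ^i d^i / (θ^m d^m)`,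
and `θ^i d^i = d^i - d^{i+1}` makes their sum telescope too, so the extrapolation from
`x^{m+1}` replaces `d^{m+1}` by `d^{k+1}`, giving `w^{j(k)} = ŵ^{j(k)}`. The two prox subproblems
then have the same strongly convex objective, whose minimiser is unique.
-/

section Prox
variable {E : Type*} [NormedAddCommGroup E] [InnerProductSpace ℝ E] {h : E → ℝ}

lemma strictConvexOn_prox_objective (hh : ConvexOn ℝ Set.univ h) (z g : E) {c : ℝ} (hc : 0 < c) :
    StrictConvexOn ℝ Set.univ fun δ ↦ h (z + δ) + ⟪g, δ⟫ + c * ‖δ‖ ^ 2 := by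
  have hlin : ConvexOn ℝ Set.univ fun δ ↦ h (z + δ) + ⟪g, δ⟫ :=
    (hh.translate_right z).add ((innerₗ E g).convexOn convex_univ)
  refine StrongConvexOn.strictConvexOn (m := 2 * c) ?_ (by positivity)
  rw [strongConvexOn_iff_convex]
  convert hlin using 2
  ring

lemma eq_of_forall_prox_objective_le (hh : ConvexOn ℝ Set.univ h) (z g : E) {c : ℝ}
    (hc : 0 < c) {p q : E}
    (hp : ∀ r, h (z + p) + ⟪g, p⟫ + c * ‖p‖ ^ 2 ≤ h (z + r) + ⟪g, r⟫ + c * ‖r‖ ^ 2)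
    (hq : ∀ r, h (z + q) + ⟪g, q⟫ + c * ‖q‖ ^ 2 ≤ h (z + r) + ⟪g, r⟫ + c * ‖r‖ ^ 2) :
    p = q :=
  (strictConvexOn_prox_objective hh z g hc).eq_of_isMinOn (isMinOn_univ_iff.2 hp)
    (isMinOn_univ_iff.2 hq) trivial trivial

end Prox

section Scalars
variable {θ d a : ℕ → ℝ}

lemma pos_of_succ_eq_mul_one_sub (hd0 : 0 < d 0) (hθ : ∀ k, θ k < 1)
    (hd : ∀ k, d (k + 1) = d k * (1 - θ k)) (k : ℕ) : 0 < d k := by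
  induction k with
  | zero => exact hd0
  | succ k ih => rw [hd]; exact mul_pos ih (sub_pos.2 (hθ k))

lemma sum_Icc_mul_eq_sub (hd : ∀ k, d (k + 1) = d k * (1 - θ k)) {m n : ℕ} (hmn : m ≤ n + 1) :
    ∑ i ∈ Icc m n, θ i * d i = d m - d (n + 1) := by
  have hstep (i : ℕ) : θ i * d i = -d (i + 1) - -d i := by rw [hd]; ring
  rw [← Ico_add_one_right_eq_Icc, sum_congr rfl fun i _ ↦ hstep i,
    sum_Ico_sub (fun i ↦ -d i) hmn]
  ring

variable (hθne : ∀ k, θ k ≠ 0) (hdne : ∀ k, d k ≠ 0) (hd : ∀ k, d (k + 1) = d k * (1 - θ k))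
  (ha : ∀ k, 1 ≤ k → a k = θ k * (1 - θ (k - 1)) / θ (k - 1))
include hθne hdne hd ha

lemma prod_Icc_eq_div {m n : ℕ} (hmn : m ≤ n) :
    ∏ i ∈ Icc (m + 1) n, a i = θ n * d n / (θ m * d m) := by
  induction n, hmn using Nat.le_induction with
  | base => rw [Icc_eq_empty (by omega), prod_empty, div_self (mul_ne_zero (hθne m) (hdne m))]
  | succ n hmn ih =>
    rw [prod_Icc_succ_top (by omega), ih, ha (n + 1) (by omega), Nat.add_sub_cancel, hd n]
    field_simp [hθne n, hdne m, hθne m]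

lemma sum_prod_Icc_mul_eq {m k : ℕ} (hmk : m ≤ k) :
    (∑ i ∈ Icc (m + 1) k, ∏ l ∈ Icc (m + 1) i, a l) * (θ m * d m) = d (m + 1) - d (k + 1) := by
  rw [sum_mul, ← sum_Icc_mul_eq_sub hd (by omega)]
  refine sum_congr rfl fun i hi ↦ ?_
  rw [prod_Icc_eq_div hθne hdne hd ha (by simp at hi; omega)]
  field_simp [hθne m, hdne m]

end Scalars

section Implementation
variable {E : Type*} [AddCommGroup E] [Module ℝ E]

lemma add_smul_sub_inv_smul_sub {d : ℝ} (hd : d ≠ 0) (θ : ℝ) (u v δ : E) :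
    (u + δ + (d * (1 - θ)) • (v - d⁻¹ • δ)) - (u + d • v) = -(θ * d) • (v - d⁻¹ • δ) := by
  match_scalars <;> field_simp <;> ring

lemma smul_add_add_one_sub_smul {d : ℝ} (hd : d ≠ 0) (θ : ℝ) (u v δ : E) :
    θ • (u + δ) + (1 - θ) • (u + d • v) = u + δ + (d * (1 - θ)) • (v - d⁻¹ • δ) := by
  match_scalars <;> field_simp <;> ring

variable {θ d a : ℕ → ℝ} {u v δ : ℕ → E}

lemma extrapolation_eq (hθne : ∀ k, θ k ≠ 0) (hdne : ∀ k, d k ≠ 0)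
    (hd : ∀ k, d (k + 1) = d k * (1 - θ k))
    (ha : ∀ k, 1 ≤ k → a k = θ k * (1 - θ (k - 1)) / θ (k - 1))
    (hu : ∀ k, u (k + 1) = u k + δ k) (hv : ∀ k, v (k + 1) = v k - (d k)⁻¹ • δ k)
    {m k : ℕ} (hmk : m ≤ k) :
    u (m + 1) + d (m + 1) • v (m + 1) + (∑ i ∈ Icc (m + 1) k, ∏ l ∈ Icc (m + 1) i, a l) •
        (u (m + 1) + d (m + 1) • v (m + 1) - (u m + d m • v m)) =
      u (m + 1) + d (k + 1) • v (m + 1) := by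
  have hstep : u (m + 1) + d (m + 1) • v (m + 1) - (u m + d m • v m) =
      -(θ m * d m) • v (m + 1) := by
    rw [hu, hv, hd]
    exact add_smul_sub_inv_smul_sub (hdne m) _ _ _ _
  rw [hstep, smul_smul, mul_neg, sum_prod_Icc_mul_eq hθne hdne hd ha hmk]
  module

end Implementation

theorem aagd_implementation_equivalence_general
    (dm : ℕ)
    (h : EuclideanSpace ℝ (Fin dm) → ℝ) (hh_conv : ConvexOn ℝ Set.univ h)
    (f' : EuclideanSpace ℝ (Fin dm) → EuclideanSpace ℝ (Fin dm))
    (γ : ℝ) (hγ : 0 < γ)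
    (θ : ℕ → ℝ) (hθ : ∀ k, 0 < θ k ∧ θ k < 1)
    (j : ℕ → ℕ) (hj : ∀ k, j k ≤ k)
    (a : ℕ → ℝ)
    (ha : ∀ k, 1 ≤ k → a k = θ k * (1 - θ (k - 1)) / θ (k - 1))
    (b : ℕ → ℕ → ℝ) (hb : ∀ l k, b l k = ∏ i ∈ Finset.Icc l k, a i)
    -- AAGD iterates
    (x z w δ : ℕ → EuclideanSpace ℝ (Fin dm))
    (hx0 : x 0 = 0) (hz0 : z 0 = 0)
    (hw : ∀ k, w k = x (j k)
        + (∑ i ∈ Finset.Icc (j k) k, b (j k) i) • (x (j k) - x (j k - 1)))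
    (hδ : ∀ k, ∀ δ' : EuclideanSpace ℝ (Fin dm),
      h (z k + δ k) + ⟪f' (w k), δ k⟫ + θ k / (2 * γ) * ‖δ k‖ ^ 2
        ≤ h (z k + δ') + ⟪f' (w k), δ'⟫ + θ k / (2 * γ) * ‖δ'‖ ^ 2)
    (hzrec : ∀ k, z (k + 1) = z k + δ k)
    (hxrec : ∀ k, x (k + 1) = θ k • z (k + 1) + (1 - θ k) • x k)
    -- implementation iterates
    (u v what δhat : ℕ → EuclideanSpace ℝ (Fin dm)) (d : ℕ → ℝ)
    (hu0 : u 0 = 0) (hv0 : v 0 = 0) (hd0 : d 0 = 1)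
    (hdrec : ∀ k, d (k + 1) = d k * (1 - θ k))
    (hwhat : ∀ k, what k = u (j k) + d (k + 1) • v (j k))
    (hδhat : ∀ k, ∀ δ' : EuclideanSpace ℝ (Fin dm),
      h (u k + δhat k) + ⟪f' (what k), δhat k⟫ + θ k / (2 * γ) * ‖δhat k‖ ^ 2
        ≤ h (u k + δ') + ⟪f' (what k), δ'⟫ + θ k / (2 * γ) * ‖δ'‖ ^ 2)
    (hurec : ∀ k, u (k + 1) = u k + δhat k)
    (hvrec : ∀ k, v (k + 1) = v k - (d k)⁻¹ • δhat k) :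
    ∀ k, z k = u k ∧ x k = u k + d k • v k ∧ w k = what k ∧ δ k = δhat k := by
  have hd k : d k ≠ 0 :=
    (pos_of_succ_eq_mul_one_sub (hd0 ▸ one_pos) (fun k ↦ (hθ k).2) hdrec k).ne'
  have hw_of_x k (hx : ∀ i ≤ k, x i = u i + d i • v i) : w k = what k := by
    rw [hw, hwhat]
    rcases hjk : j k with _ | m
    · -- `j k - 1 = 0` in `ℕ`, so the momentum term vanishes
      simp [hx0, hu0, hv0]
    · have hmk : m + 1 ≤ k := hjk ▸ hj k
      simp only [hb, Nat.add_sub_cancel, hx (m + 1) hmk, hx m (by omega)]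
      exact extrapolation_eq (fun k ↦ (hθ k).1.ne') hd hdrec ha hurec hvrec (by omega)
  have hδ_eq k (hwk : w k = what k) (hzk : z k = u k) : δ k = δhat k :=
    eq_of_forall_prox_objective_le hh_conv (u k) (f' (what k))
      (div_pos (hθ k).1 (by positivity)) (hwk ▸ hzk ▸ hδ k) (hδhat k)
  have hzx k : z k = u k ∧ x k = u k + d k • v k := by
    induction k using Nat.strong_induction_on with
    | _ k ih =>
      rcases k with _ | k
      · simp [hz0, hx0, hu0, hv0]
      · obtain ⟨hzk, hxk⟩ := ih k k.lt_succ_self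
        have hzk' : z (k + 1) = u (k + 1) := by
          rw [hzrec, hurec, hzk, hδ_eq k (hw_of_x k fun i hi ↦ (ih i (by omega)).2) hzk]
        refine ⟨hzk', ?_⟩
        rw [hxrec, hzk', hurec, hvrec, hdrec, hxk]
        exact smul_add_add_one_sub_smul (hd k) _ _ _ _
  have hw_eq k : w k = what k := hw_of_x k fun i _ ↦ (hzx i).2
  exact fun k ↦ ⟨(hzx k).1, (hzx k).2, hw_eq k, hδ_eq k (hw_eq k) (hzx k).1⟩

/-- Equivalence of AAGD (Algorithm 2) and its implementation form (Algorithm 3):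
for every `k`, `z^k = u^k`, `x^k = u^k + d^k v^k`, the momentum-compensated points
coincide (`w^{j(k)} = ŵ^{j(k)}`), and the proximal steps coincide (`δ^k = δ̂^k`);
in particular both algorithms generate identical sequences of iterates. -/
theorem aagd_implementation_equivalence
    (dm : ℕ)
    (h : EuclideanSpace ℝ (Fin dm) → ℝ) (hh_conv : ConvexOn ℝ Set.univ h)
    (f : EuclideanSpace ℝ (Fin dm) → ℝ)
    (f' : EuclideanSpace ℝ (Fin dm) → EuclideanSpace ℝ (Fin dm))
    (hf_grad : ∀ u, HasGradientAt f (f' u) u)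
    (γ : ℝ) (hγ : 0 < γ)
    (θ : ℕ → ℝ) (hθ : ∀ k, 0 < θ k ∧ θ k < 1)
    (j : ℕ → ℕ) (hj : ∀ k, j k ≤ k)
    (a : ℕ → ℝ) (ha0 : a 0 = 0)
    (ha : ∀ k, 1 ≤ k → a k = θ k * (1 - θ (k - 1)) / θ (k - 1))
    (b : ℕ → ℕ → ℝ) (hb : ∀ l k, b l k = ∏ i ∈ Finset.Icc l k, a i)
    -- AAGD iterates
    (x z w δ : ℕ → EuclideanSpace ℝ (Fin dm))
    (hx0 : x 0 = 0) (hz0 : z 0 = 0)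
    (hw : ∀ k, w k = x (j k)
        + (∑ i ∈ Finset.Icc (j k) k, b (j k) i) • (x (j k) - x (j k - 1)))
    (hδ : ∀ k, ∀ δ' : EuclideanSpace ℝ (Fin dm),
      h (z k + δ k) + ⟪f' (w k), δ k⟫ + θ k / (2 * γ) * ‖δ k‖ ^ 2
        ≤ h (z k + δ') + ⟪f' (w k), δ'⟫ + θ k / (2 * γ) * ‖δ'‖ ^ 2)
    (hzrec : ∀ k, z (k + 1) = z k + δ k)
    (hxrec : ∀ k, x (k + 1) = θ k • z (k + 1) + (1 - θ k) • x k)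
    -- implementation iterates
    (u v what δhat : ℕ → EuclideanSpace ℝ (Fin dm)) (d : ℕ → ℝ)
    (hu0 : u 0 = 0) (hv0 : v 0 = 0) (hd0 : d 0 = 1)
    (hdrec : ∀ k, d (k + 1) = d k * (1 - θ k))
    (hwhat : ∀ k, what k = u (j k) + d (k + 1) • v (j k))
    (hδhat : ∀ k, ∀ δ' : EuclideanSpace ℝ (Fin dm),
      h (u k + δhat k) + ⟪f' (what k), δhat k⟫ + θ k / (2 * γ) * ‖δhat k‖ ^ 2
        ≤ h (u k + δ') + ⟪f' (what k), δ'⟫ + θ k / (2 * γ) * ‖δ'‖ ^ 2)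
    (hurec : ∀ k, u (k + 1) = u k + δhat k)
    (hvrec : ∀ k, v (k + 1) = v k - (d k)⁻¹ • δhat k) :
    ∀ k, z k = u k ∧ x k = u k + d k • v k ∧ w k = what k ∧ δ k = δhat k :=
  aagd_implementation_equivalence_general dm h hh_conv f' γ hγ θ hθ j hj a ha b hb x z w δ hx0 hz0
    hw hδ hzrec hxrec u v what δhat d hu0 hv0 hd0 hdrec hwhat hδhat hurec hvrec
end
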